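/- arXiv:1901.07616 — 8 statements merged into one kernel-verified Lean document; each statement's English description precedes it below -/
import Mathlib

section
/- Let Q be a CCS. A point z ∈ Q is an extreme point of Q if and only if the only regular Borel probability measure ν on Q having z as a barycenter is the Dirac measure δ_z. -/
/-!
If `z` is extreme and `μ` has barycenter `z`, every open half-space `{g < g z}` is `μ`-null.
Otherwise conditioning `μ` on the half-space and on its complement (which is charged too, since
`g z` is the mean of `g`) writes `z` as a proper convex combination of the two conditional
barycenters; these exist in `Q` by compactness, the finite-dimensional images
`x ↦ (f x)_{f ∈ F}` providing the finite intersection property. Extremality then makes the first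
barycenter equal to `z`, although its measure lives where `g < g z`. As the half-spaces cover
`{z}ᶜ`, inner regularity and a finite subcover give `μ {z}ᶜ = 0`.

Conversely, `z = a x₁ + (1 - a) x₂` is the barycenter of the two-point measure
`a δ_{x₁} + (1 - a) δ_{x₂}`, which is regular and differs from `δ_z` unless `x₁ = z`.
-/

open MeasureTheory ProbabilityTheory Set

section Regular

variable {X : Type*} [TopologicalSpace X] [T1Space X] [MeasurableSpace X]

theorem MeasureTheory.Measure.regular_of_finite_of_measure_compl_eq_zero {μ : Measure X}
    [IsFiniteMeasure μ] {S : Set X} (hS : S.Finite) (hμS : μ Sᶜ = 0) : μ.Regular where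
  outerRegular A _ r hr := by
    refine ⟨(S \ A)ᶜ, fun x hx hxSA => hxSA.2 hx, (hS.subset sdiff_subset).isClosed.isOpen_compl,
      lt_of_le_of_lt ?_ hr⟩
    rw [← measure_inter_conull hμS]
    exact measure_mono fun x hx => not_not.1 fun hxA => hx.1 ⟨hx.2, hxA⟩
  innerRegular U _ r hr := ⟨U ∩ S, inter_subset_left, (hS.subset inter_subset_right).isCompact,
    by rwa [measure_inter_conull hμS]⟩

instance ProbabilityTheory.regular_bernoulliMeasure [OpensMeasurableSpace X] (x y : X)
    (p : unitInterval) : (bernoulliMeasure x y p).Regular :=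
  Measure.regular_of_finite_of_measure_compl_eq_zero (toFinite {x, y}) <|
    bernoulliMeasure_apply_of_notMem_of_notMem p (toFinite {x, y}).measurableSet.compl
      (by simp) (by simp)

end Regular

theorem Continuous.integrable_of_ae_mem_isCompact {X E : Type*} [TopologicalSpace X] [T2Space X]
    [MeasurableSpace X] [OpensMeasurableSpace X] [NormedAddCommGroup E]
    [SecondCountableTopologyEither X E] {μ : Measure X} [IsFiniteMeasure μ] {K : Set X}
    (hK : IsCompact K) (hμK : ∀ᵐ x ∂μ, x ∈ K) {f : X → E} (hf : Continuous f) :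
    Integrable f μ := by
  rw [← Measure.restrict_eq_self_of_ae_mem hμK]
  exact hf.continuousOn.integrableOn_compact hK

theorem measureReal_smul_integral_cond {Ω E : Type*} [MeasurableSpace Ω] [NormedAddCommGroup E]
    [NormedSpace ℝ E] {μ : Measure Ω} {s : Set Ω} (hs : μ s ≠ ⊤) (f : Ω → E) :
    μ.real s • ∫ x, f x ∂μ[|s] = ∫ x in s, f x ∂μ := by
  rcases eq_or_ne (μ s) 0 with h | h
  · simp [Measure.restrict_eq_zero.2 h, measureReal_def, h]
  · rw [measureReal_def, ProbabilityTheory.cond, integral_smul_measure, smul_smul,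
      ← ENNReal.toReal_mul, ENNReal.mul_inv_cancel h hs, ENNReal.toReal_one, one_smul]

theorem iUnion_setOf_lt_eq_compl_singleton {X : Type*} [AddCommGroup X] [Module ℝ X]
    [TopologicalSpace X] [SeparatingDual ℝ X] (z : X) :
    ⋃ g : X →L[ℝ] ℝ, {x | g x < g z} = {z}ᶜ := by
  ext x
  simp only [mem_iUnion, mem_ofPred_eq, mem_compl_singleton_iff]
  refine ⟨fun ⟨g, hg⟩ hxz => (hxz ▸ hg).false, fun hxz => ?_⟩
  obtain ⟨g, hg⟩ := SeparatingDual.exists_separating_of_ne (R := ℝ) hxz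
  rcases hg.lt_or_gt with h | h
  exacts [⟨g, h⟩, ⟨-g, by simpa using h⟩]

section Barycenter

variable {X : Type*} [AddCommGroup X] [Module ℝ X] [TopologicalSpace X] [MeasurableSpace X]

def IsBarycenter (μ : Measure X) (b : X) : Prop :=
  ∀ f : X →L[ℝ] ℝ, f b = ∫ x, f x ∂μ

theorem exists_mem_forall_mem_finset_eq_integral [T2Space X] [OpensMeasurableSpace X] {Q : Set X}
    (hQc : IsCompact Q) (hQv : Convex ℝ Q) {μ : Measure X} [IsProbabilityMeasure μ]
    (hμQ : ∀ᵐ x ∂μ, x ∈ Q) (u : Finset (X →L[ℝ] ℝ)) :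
    ∃ b ∈ Q, ∀ f ∈ u, f b = ∫ x, f x ∂μ := by
  let T : X →L[ℝ] (u → ℝ) := ContinuousLinearMap.pi fun f => f.1
  have hT : Integrable T μ := T.continuous.integrable_of_ae_mem_isCompact hQc hμQ
  obtain ⟨b, hbQ, hb⟩ : ∫ x, T x ∂μ ∈ T '' Q :=
    (hQv.linear_image T.toLinearMap).integral_mem (hQc.image T.continuous).isClosed
      (hμQ.mono fun x hx => mem_image_of_mem T hx) hT
  refine ⟨b, hbQ, fun f hf => ?_⟩
  calc f b = T b ⟨f, hf⟩ := rfl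
    _ = ∫ x, T x ⟨f, hf⟩ ∂μ := by rw [hb, eval_integral hT.eval]

theorem exists_isBarycenter_mem [T2Space X] [OpensMeasurableSpace X] {Q : Set X}
    (hQc : IsCompact Q) (hQv : Convex ℝ Q) {μ : Measure X} [IsProbabilityMeasure μ]
    (hμQ : ∀ᵐ x ∂μ, x ∈ Q) : ∃ b ∈ Q, IsBarycenter μ b := by
  obtain ⟨b, hbQ, hb⟩ := hQc.inter_iInter_nonempty (fun f : X →L[ℝ] ℝ => {x | f x = ∫ x, f x ∂μ})
    (fun f => isClosed_eq f.continuous continuous_const) fun u => by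
      obtain ⟨b, hbQ, hb⟩ := exists_mem_forall_mem_finset_eq_integral hQc hQv hμQ u
      exact ⟨b, hbQ, mem_iInter₂.2 hb⟩
  exact ⟨b, hbQ, mem_iInter.1 hb⟩

theorem IsBarycenter.measure_le_pos {μ : Measure X} [IsProbabilityMeasure μ] {b : X}
    (hb : IsBarycenter μ b) {g : X →L[ℝ] ℝ} (hg : Integrable g μ) :
    0 < μ {x | g b ≤ g x} :=
  hb g ▸ measure_integral_le_pos hg

theorem mem_openSegment_of_isBarycenter_cond [SeparatingDual ℝ X] {μ : Measure X}
    [IsProbabilityMeasure μ] (hint : ∀ f : X →L[ℝ] ℝ, Integrable f μ) {A : Set X}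
    (hA : MeasurableSet A) (hA₀ : μ A ≠ 0) (hAc₀ : μ Aᶜ ≠ 0) {z b₁ b₂ : X}
    (hz : IsBarycenter μ z) (hb₁ : IsBarycenter μ[|A] b₁) (hb₂ : IsBarycenter μ[|Aᶜ] b₂) :
    z ∈ openSegment ℝ b₁ b₂ := by
  refine ⟨μ.real A, μ.real Aᶜ, ENNReal.toReal_pos hA₀ (measure_ne_top _ _),
    ENNReal.toReal_pos hAc₀ (measure_ne_top _ _), probReal_add_probReal_compl hA, ?_⟩
  refine (SeparatingDual.eq_iff_forall_dual_eq (R := ℝ)).2 fun f => ?_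
  rw [map_add, map_smul, map_smul, hb₁, hb₂, measureReal_smul_integral_cond (measure_ne_top _ _),
    measureReal_smul_integral_cond (measure_ne_top _ _), integral_add_compl hA (hint f), hz]

theorem measure_setOf_lt_eq_zero_of_mem_extremePoints [T2Space X] [OpensMeasurableSpace X]
    [SeparatingDual ℝ X] {Q : Set X} (hQc : IsCompact Q) (hQv : Convex ℝ Q) {z : X}
    (hz : z ∈ Q.extremePoints ℝ) {μ : Measure X} [IsProbabilityMeasure μ] (hμQ : ∀ᵐ x ∂μ, x ∈ Q)
    (hbar : IsBarycenter μ z) (g : X →L[ℝ] ℝ) : μ {x | g x < g z} = 0 := by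
  set A := {x | g x < g z}
  have hA : MeasurableSet A := measurableSet_lt g.continuous.measurable measurable_const
  have hint (f : X →L[ℝ] ℝ) : Integrable f μ := f.continuous.integrable_of_ae_mem_isCompact hQc hμQ
  by_contra hA₀
  have hAc₀ : μ Aᶜ ≠ 0 := by
    simpa only [A, compl_ofPred, not_lt] using (hbar.measure_le_pos (hint g)).ne'
  have : IsProbabilityMeasure μ[|A] := cond_isProbabilityMeasure hA₀
  have : IsProbabilityMeasure μ[|Aᶜ] := cond_isProbabilityMeasure hAc₀
  have hAQ : ∀ᵐ x ∂μ[|A], x ∈ Q := cond_absolutelyContinuous.ae_le hμQ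
  obtain ⟨b₁, hb₁Q, hb₁⟩ := exists_isBarycenter_mem hQc hQv hAQ
  obtain ⟨b₂, hb₂Q, hb₂⟩ := exists_isBarycenter_mem hQc hQv (μ := μ[|Aᶜ])
    (cond_absolutelyContinuous.ae_le hμQ)
  have hseg : z ∈ openSegment ℝ b₁ b₂ :=
    mem_openSegment_of_isBarycenter_cond hint hA hA₀ hAc₀ hbar hb₁ hb₂
  have hb₁z : b₁ = z := (mem_extremePoints_iff_left.1 hz).2 b₁ hb₁Q b₂ hb₂Q hseg
  have hpos := hb₁.measure_le_pos (g.continuous.integrable_of_ae_mem_isCompact hQc hAQ)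
  rw [hb₁z] at hpos
  exact hpos.ne' (measure_mono_null (fun x (hx : g z ≤ g x) (hxA : x ∈ A) => hx.not_gt hxA)
    (ae_cond_mem hA))

theorem eq_dirac_of_forall_measure_setOf_lt_eq_zero [T1Space X] [OpensMeasurableSpace X]
    [SeparatingDual ℝ X] {μ : Measure X} [IsProbabilityMeasure μ] [μ.Regular] {z : X}
    (h : ∀ g : X →L[ℝ] ℝ, μ {x | g x < g z} = 0) : μ = Measure.dirac z := by
  have hz : μ {z}ᶜ = 0 := by
    rw [isOpen_compl_singleton.measure_eq_iSup_isCompact]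
    simp only [ENNReal.iSup_eq_zero]
    intro K hKz hK
    rw [← iUnion_setOf_lt_eq_compl_singleton] at hKz
    obtain ⟨t, ht⟩ :=
      hK.elim_finite_subcover _ (fun g => isOpen_lt g.continuous continuous_const) hKz
    exact measure_mono_null ht ((measure_biUnion_null_iff t.countable_toSet).2 fun g _ => h g)
  rw [← Measure.restrict_eq_self_of_ae_mem (μ := μ) (s := {z}) hz, Measure.restrict_singleton,
    (prob_compl_eq_zero_iff (measurableSet_singleton z)).1 hz, one_smul]

theorem eq_dirac_of_isBarycenter_of_mem_extremePoints [T2Space X] [OpensMeasurableSpace X]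
    [SeparatingDual ℝ X] {Q : Set X} (hQc : IsCompact Q) (hQv : Convex ℝ Q) {z : X}
    (hz : z ∈ Q.extremePoints ℝ) {μ : Measure X} [IsProbabilityMeasure μ] [μ.Regular]
    (hμQ : ∀ᵐ x ∂μ, x ∈ Q) (hbar : IsBarycenter μ z) : μ = Measure.dirac z :=
  eq_dirac_of_forall_measure_setOf_lt_eq_zero
    (measure_setOf_lt_eq_zero_of_mem_extremePoints hQc hQv hz hμQ hbar)

theorem mem_extremePoints_of_forall_isBarycenter_eq_dirac [T1Space X] [OpensMeasurableSpace X]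
    {Q : Set X} (hQ : MeasurableSet Q) {z : X} (hz : z ∈ Q)
    (h : ∀ μ : Measure X, IsProbabilityMeasure μ → μ.Regular → μ Q = 1 → IsBarycenter μ z →
      μ = Measure.dirac z) :
    z ∈ Q.extremePoints ℝ := by
  refine mem_extremePoints_iff_left.2 ⟨hz, fun x₁ hx₁ x₂ hx₂ ⟨a, b, ha, _, hab, habz⟩ => ?_⟩
  let p : unitInterval := ⟨a, ha.le, by linarith⟩
  have hν : bernoulliMeasure x₁ x₂ p = Measure.dirac z := by
    refine h _ inferInstance inferInstance (bernoulliMeasure_apply_of_mem_of_mem p hQ hx₁ hx₂)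
      fun f => ?_
    rw [integral_bernoulliMeasure, ← habz, ← eq_sub_of_add_eq' hab]
    simp [p]
  by_contra hx₁z
  have hx₁ : x₁ ∈ ({z}ᶜ : Set X) := hx₁z
  have hpos : bernoulliMeasure x₁ x₂ p {z}ᶜ ≠ 0 := by
    by_cases hx₂ : x₂ ∈ ({z}ᶜ : Set X)
    · simp [bernoulliMeasure_apply_of_mem_of_mem p (measurableSet_singleton z).compl hx₁ hx₂]
    · have hp : unitInterval.toNNReal p ≠ 0 := fun hp => ha.ne' (congrArg NNReal.toReal hp)
      simp [bernoulliMeasure_apply_of_mem_of_notMem p (measurableSet_singleton z).compl hx₁ hx₂, hp]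
  simp [hν] at hpos

end Barycenter

theorem stmt_1_general {X : Type*}
    [AddCommGroup X] [Module ℝ X] [TopologicalSpace X]
    [T2Space X] [SeparatingDual ℝ X]
    [MeasurableSpace X] [BorelSpace X]
    (Q : Set X) (hQcomp : IsCompact Q) (hQconv : Convex ℝ Q)
    (z : X) (hz : z ∈ Q) :
    z ∈ Q.extremePoints ℝ ↔
      ∀ ν : Measure X, IsProbabilityMeasure ν → ν.Regular → ν Q = 1 →
        (∀ f : X →L[ℝ] ℝ, f z = ∫ x, f x ∂ν) → ν = Measure.dirac z := by
  have hQ : MeasurableSet Q := hQcomp.isClosed.measurableSet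
  refine ⟨fun hext ν _ _ hνQ hbar => ?_, mem_extremePoints_of_forall_isBarycenter_eq_dirac hQ hz⟩
  exact eq_dirac_of_isBarycenter_of_mem_extremePoints hQcomp hQconv hext
    ((ae_mem_iff_measure_eq hQ.nullMeasurableSet).2 (by rw [hνQ, measure_univ])) hbar

/-- Let `Q` be a CCS (a nonempty compact convex subset of a real topological
vector space whose continuous dual separates points).  A point `z ∈ Q` is an extreme point of
`Q` if and only if the only regular Borel probability measure `ν` on `Q` having `z` as a
barycenter is the Dirac measure `δ_z`. -/
theorem stmt_1 {X : Type*}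
    [AddCommGroup X] [Module ℝ X] [TopologicalSpace X]
    [IsTopologicalAddGroup X] [ContinuousSMul ℝ X] [T2Space X] [SeparatingDual ℝ X]
    [MeasurableSpace X] [BorelSpace X]
    (Q : Set X) (hQne : Q.Nonempty) (hQcomp : IsCompact Q) (hQconv : Convex ℝ Q)
    (z : X) (hz : z ∈ Q) :
    z ∈ Q.extremePoints ℝ ↔
      ∀ ν : Measure X, IsProbabilityMeasure ν → ν.Regular → ν Q = 1 →
        (∀ f : X →L[ℝ] ℝ, f z = ∫ x, f x ∂ν) → ν = Measure.dirac z :=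
  stmt_1_general Q hQcomp hQconv z hz
end

section
/- An affine representation (G,Q) of a topological group G is irreducible if and only if for every x ∈ Q the closure of the orbit Gx contains the closure of the set of extreme points of Q. -/
/-!
By the Krein–Milman theorem and its converse (Milman's theorem), for a compact convex `Q` and
`S ⊆ Q` we have `Q ⊆ closure (convexHull S)` iff every extreme point of `Q` lies in
`closure S`. Irreducibility says exactly that the closed convex hull of every orbit is `Q`, so
the theorem is this equivalence applied to the orbits. Neither theorem needs local convexity
here: on the compact set `Q` the topology of `X` agrees with the weak topology, which is locally
convex and, since the dual separates points, Hausdorff.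
-/

open Set Topology

section ConvexHullCompact

variable {E : Type*} [AddCommGroup E] [Module ℝ E] [TopologicalSpace E]
  [ContinuousAdd E] [ContinuousSMul ℝ E]

theorem isCompact_convexJoin {s t : Set E} (hs : IsCompact s) (ht : IsCompact t) :
    IsCompact (convexJoin ℝ s t) := by
  have : convexJoin ℝ s t =
      (fun p : ℝ × E × E => (1 - p.1) • p.2.1 + p.1 • p.2.2) '' (Icc 0 1 ×ˢ s ×ˢ t) := by
    ext z
    simp only [mem_convexJoin, segment_eq_image, mem_image, mem_prod, Prod.exists]
    constructor
    · rintro ⟨x, hx, y, hy, θ, hθ, rfl⟩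
      exact ⟨θ, x, y, ⟨hθ, hx, hy⟩, rfl⟩
    · rintro ⟨θ, x, y, ⟨hθ, hx, hy⟩, rfl⟩
      exact ⟨x, hx, y, hy, θ, hθ, rfl⟩
  rw [this]
  exact (isCompact_Icc.prod (hs.prod ht)).image (by fun_prop)

theorem isCompact_convexHull_union {s t : Set E} (hs : IsCompact s) (ht : IsCompact t)
    (hsc : Convex ℝ s) (htc : Convex ℝ t) : IsCompact (convexHull ℝ (s ∪ t)) := by
  rcases s.eq_empty_or_nonempty with rfl | hs₀
  · rwa [empty_union, htc.convexHull_eq]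
  rcases t.eq_empty_or_nonempty with rfl | ht₀
  · rwa [union_empty, hsc.convexHull_eq]
  rw [hsc.convexHull_union htc hs₀ ht₀]
  exact isCompact_convexJoin hs ht

theorem isCompact_convexHull_biUnion {ι : Type*} {K : ι → Set E} (t : Finset ι)
    (hK : ∀ i ∈ t, IsCompact (K i)) (hKc : ∀ i ∈ t, Convex ℝ (K i)) :
    IsCompact (convexHull ℝ (⋃ i ∈ t, K i)) := by
  classical
  induction t using Finset.induction_on with
  | empty => simp
  | insert a t _ ih =>
    rw [Finset.set_biUnion_insert, ← convexHull_convexHull_union_right]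
    exact isCompact_convexHull_union (hK a (t.mem_insert_self a))
      (ih (fun i hi => hK i (Finset.mem_insert_of_mem hi))
        (fun i hi => hKc i (Finset.mem_insert_of_mem hi)))
      (hKc a (t.mem_insert_self a)) (convex_convexHull ℝ _)

end ConvexHullCompact

section LocallyConvex

variable {E : Type*} [AddCommGroup E] [Module ℝ E] [TopologicalSpace E]
  [IsTopologicalAddGroup E] [ContinuousSMul ℝ E] [LocallyConvexSpace ℝ E]

theorem exists_isClosed_convex_mem_nhds_zero_subset {U : Set E} (hU : U ∈ 𝓝 0) :
    ∃ V ∈ 𝓝 (0 : E), IsClosed V ∧ Convex ℝ V ∧ V ⊆ U := by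
  obtain ⟨D, hD, hDclosed, hDU⟩ := exists_mem_nhds_isClosed_subset hU
  obtain ⟨W, ⟨hW, hWconv⟩, hWD⟩ := (LocallyConvexSpace.convex_basis_zero ℝ E).mem_iff.mp hD
  exact ⟨closure W, Filter.mem_of_superset hW subset_closure, isClosed_closure, hWconv.closure,
    (closure_minimal hWD hDclosed).trans hDU⟩

variable [T2Space E]

/-- **Milman's theorem**. -/
theorem extremePoints_subset_closure_of_subset_closure_convexHull {Q S : Set E}
    (hQ : IsCompact Q) (hQc : Convex ℝ Q) (hSQ : S ⊆ Q) (hQS : Q ⊆ closure (convexHull ℝ S)) :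
    Q.extremePoints ℝ ⊆ closure S := by
  intro x hx
  refine (closure_closure (s := S)).subset (mem_closure_iff_nhds.mpr fun N hN => ?_)
  set T := closure S
  have hTQ : T ⊆ Q := closure_minimal hSQ hQ.isClosed
  have hN₀ : (x - ·) ⁻¹' N ∈ 𝓝 (0 : E) :=
    (continuous_const.sub continuous_id).continuousAt.preimage_mem_nhds (by simpa using hN)
  obtain ⟨V, hV, hVclosed, hVc, hVN⟩ := exists_isClosed_convex_mem_nhds_zero_subset hN₀
  obtain ⟨t, htT, hTt⟩ := (hQ.of_isClosed_subset isClosed_closure hTQ).elim_nhds_subcover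
    (fun i => (· - i) ⁻¹' V) fun i _ =>
      (continuous_id.sub continuous_const).continuousAt.preimage_mem_nhds (by simpa using hV)
  -- `Q` is the convex hull of the compact convex pieces `K i ⊆ i + V`, so its extreme point `x`
  -- lies in one of them, and then `i ∈ x - V ⊆ N`.
  set K := fun i => closure (convexHull ℝ (T ∩ (· - i) ⁻¹' V))
  have hKQ : ∀ i, K i ⊆ Q := fun i =>
    closure_minimal (convexHull_min (inter_subset_left.trans hTQ) hQc) hQ.isClosed
  have hKV : ∀ i, K i ⊆ (· - i) ⁻¹' V := fun i =>
    closure_minimal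
      (convexHull_min inter_subset_right
        (by simpa [neg_add_eq_sub] using hVc.translate_preimage_right (-i)))
      (hVclosed.preimage (continuous_id.sub continuous_const))
  set M := convexHull ℝ (⋃ i ∈ t, K i)
  have hM : IsCompact M := isCompact_convexHull_biUnion t
    (fun i _ => hQ.of_isClosed_subset isClosed_closure (hKQ i))
    (fun i _ => (convex_convexHull ℝ _).closure)
  have hSM : S ⊆ M := fun s hs => by
    obtain ⟨i, hi, hsi⟩ := mem_iUnion₂.mp (hTt (subset_closure hs))
    exact subset_convexHull ℝ _ (mem_biUnion hi
      (subset_closure (subset_convexHull ℝ _ ⟨subset_closure hs, hsi⟩)))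
  have hQM : Q = M := (hQS.trans (closure_minimal (convexHull_min hSM (convex_convexHull ℝ _))
    hM.isClosed)).antisymm (convexHull_min (iUnion₂_subset fun i _ => hKQ i) hQc)
  rw [hQM] at hx
  obtain ⟨i, hi, hxi⟩ := mem_iUnion₂.mp (extremePoints_convexHull_subset hx)
  exact ⟨i, by simpa using hVN (hKV i hxi), htT i hi⟩

theorem subset_closure_convexHull_iff_extremePoints_subset_closure {Q S : Set E}
    (hQ : IsCompact Q) (hQc : Convex ℝ Q) (hSQ : S ⊆ Q) :
    Q ⊆ closure (convexHull ℝ S) ↔ Q.extremePoints ℝ ⊆ closure S := by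
  refine ⟨extremePoints_subset_closure_of_subset_closure_convexHull hQ hQc hSQ, fun h => ?_⟩
  calc Q = closure (convexHull ℝ (Q.extremePoints ℝ)) :=
        (closure_convexHull_extremePoints hQ hQc).symm
    _ ⊆ closure (convexHull ℝ S) :=
        closure_minimal (convexHull_min (h.trans (closure_mono (subset_convexHull ℝ S)))
          (convex_convexHull ℝ S).closure) isClosed_closure

end LocallyConvex

theorem Continuous.image_closure_of_isCompact {X Y : Type*} [TopologicalSpace X]
    [TopologicalSpace Y] [T2Space Y] {f : X → Y} (hf : Continuous f) {s : Set X}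
    (hs : IsCompact (closure s)) : f '' closure s = closure (f '' s) :=
  (image_closure_subset_closure_image hf).antisymm
    (closure_minimal (image_mono subset_closure) (hs.image hf).isClosed)

theorem subset_closure_convexHull_iff_extremePoints_subset_closure_of_separatingDual
    {X : Type*} [AddCommGroup X] [Module ℝ X] [TopologicalSpace X] [T2Space X]
    [SeparatingDual ℝ X] {Q S : Set X} (hQ : IsCompact Q) (hQc : Convex ℝ Q) (hSQ : S ⊆ Q) :
    Q ⊆ closure (convexHull ℝ S) ↔ Q.extremePoints ℝ ⊆ closure S := by
  have : LocallyConvexSpace ℝ (WeakSpace ℝ X) := WeakBilin.locallyConvexSpace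
  set e := toWeakSpace ℝ X
  have he : Continuous e := by
    simpa [funext (toWeakSpaceCLM_eq_toWeakSpace ℝ X)] using (toWeakSpaceCLM ℝ X).continuous
  have hcl : ∀ A ⊆ Q, e '' closure A = closure (e '' A) := fun A hA =>
    he.image_closure_of_isCompact
      (hQ.of_isClosed_subset isClosed_closure (closure_minimal hA hQ.isClosed))
  have hhull : e '' convexHull ℝ S = convexHull ℝ (e '' S) := e.toLinearMap.image_convexHull S
  have key := subset_closure_convexHull_iff_extremePoints_subset_closure (hQ.image he)
    (hQc.linear_image e.toLinearMap) (image_mono hSQ)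
  rwa [← hhull, ← hcl _ (convexHull_min hSQ hQc), ← hcl _ hSQ,
    ← image_extremePoints, image_subset_image_iff e.injective,
    image_subset_image_iff e.injective] at key

section AffineRepresentation

variable {G E : Type*} [AddCommGroup E] [Module ℝ E]

theorem mapsTo_convexHull_of_affine {f : E → E} {Q S : Set E} (hSQ : convexHull ℝ S ⊆ Q)
    (hf : ∀ x₁ ∈ Q, ∀ x₂ ∈ Q, ∀ t : ℝ, 0 ≤ t → t ≤ 1 →
      f (t • x₁ + (1 - t) • x₂) = t • f x₁ + (1 - t) • f x₂)
    (hS : MapsTo f S S) : MapsTo f (convexHull ℝ S) (convexHull ℝ S) := by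
  refine fun y hy => (convexHull_min (t := {y | y ∈ convexHull ℝ S ∧ f y ∈ convexHull ℝ S})
    (fun y hy => ⟨subset_convexHull ℝ S hy, subset_convexHull ℝ S (hS hy)⟩) ?_ hy).2
  rintro y₁ ⟨hy₁, hfy₁⟩ y₂ ⟨hy₂, hfy₂⟩ a b ha hb hab
  obtain rfl : b = 1 - a := by linarith
  refine ⟨convex_convexHull ℝ S hy₁ hy₂ ha hb hab, ?_⟩
  rw [hf y₁ (hSQ hy₁) y₂ (hSQ hy₂) a ha (by linarith)]
  exact convex_convexHull ℝ S hfy₁ hfy₂ ha hb hab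

variable [TopologicalSpace E]

def IsIrreducibleRep (ρ : G → E → E) (Q : Set E) : Prop :=
  ∀ C : Set E, C ⊆ Q → C.Nonempty → IsClosed C → Convex ℝ C → (∀ g : G, MapsTo (ρ g) C C) → C = Q

theorem mapsTo_closure_convexHull_of_affine {f : E → E} {Q S : Set E}
    (hSQ : closure (convexHull ℝ S) ⊆ Q) (hfc : ContinuousOn f Q)
    (hf : ∀ x₁ ∈ Q, ∀ x₂ ∈ Q, ∀ t : ℝ, 0 ≤ t → t ≤ 1 →
      f (t • x₁ + (1 - t) • x₂) = t • f x₁ + (1 - t) • f x₂)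
    (hS : MapsTo f S S) : MapsTo f (closure (convexHull ℝ S)) (closure (convexHull ℝ S)) :=
  (mapsTo_convexHull_of_affine (subset_closure.trans hSQ) hf hS).closure_of_continuousOn
    (hfc.mono hSQ)

variable [IsTopologicalAddGroup E] [ContinuousSMul ℝ E]

theorem isIrreducibleRep_iff_forall_subset_closure_convexHull_orbit [Monoid G] {ρ : G → E → E}
    {Q : Set E} (hQc : Convex ℝ Q) (hQ : IsClosed Q) (hmaps : ∀ g : G, MapsTo (ρ g) Q Q)
    (hcont : ∀ g : G, ContinuousOn (ρ g) Q) (hmul : ∀ g h : G, ∀ x ∈ Q, ρ (g * h) x = ρ g (ρ h x))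
    (haff : ∀ g : G, ∀ x₁ ∈ Q, ∀ x₂ ∈ Q, ∀ t : ℝ, 0 ≤ t → t ≤ 1 →
      ρ g (t • x₁ + (1 - t) • x₂) = t • ρ g x₁ + (1 - t) • ρ g x₂) :
    IsIrreducibleRep ρ Q ↔ ∀ x ∈ Q, Q ⊆ closure (convexHull ℝ {y | ∃ g : G, y = ρ g x}) := by
  refine ⟨fun hirr x hx => ?_, fun h C hCQ ⟨x, hxC⟩ hC hCc hCinv => ?_⟩
  · set O := {y | ∃ g : G, y = ρ g x}
    have horbit : O ⊆ Q := by
      rintro _ ⟨g, rfl⟩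
      exact hmaps g hx
    have hhull : closure (convexHull ℝ O) ⊆ Q := closure_minimal (convexHull_min horbit hQc) hQ
    have hinv : ∀ g, MapsTo (ρ g) O O := by
      rintro g _ ⟨h, rfl⟩
      exact ⟨g * h, (hmul g h x hx).symm⟩
    refine (hirr _ hhull ⟨ρ 1 x, subset_closure (subset_convexHull ℝ _ ⟨1, rfl⟩)⟩
      isClosed_closure (convex_convexHull ℝ _).closure fun g =>
        mapsTo_closure_convexHull_of_affine hhull (hcont g) (haff g) (hinv g)).ge
  · have horbit : {y | ∃ g : G, y = ρ g x} ⊆ C := by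
      rintro _ ⟨g, rfl⟩
      exact hCinv g hxC
    exact hCQ.antisymm ((h x (hCQ hxC)).trans
      (closure_minimal (convexHull_min horbit hCc) hC))

end AffineRepresentation

theorem stmt_2_general {G X : Type*} [Group G] [TopologicalSpace G]
    [AddCommGroup X] [Module ℝ X] [TopologicalSpace X]
    [IsTopologicalAddGroup X] [ContinuousSMul ℝ X] [T2Space X] [SeparatingDual ℝ X]
    (Q : Set X) (hQcomp : IsCompact Q) (hQconv : Convex ℝ Q)
    (ρ : G → X → X)
    (hmaps : ∀ g : G, MapsTo (ρ g) Q Q)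
    (hcont : ContinuousOn (fun p : G × X => ρ p.1 p.2) (univ ×ˢ Q))
    (hmul : ∀ g h : G, ∀ x ∈ Q, ρ (g * h) x = ρ g (ρ h x))
    (haff : ∀ g : G, ∀ x₁ ∈ Q, ∀ x₂ ∈ Q, ∀ t : ℝ, 0 ≤ t → t ≤ 1 →
      ρ g (t • x₁ + (1 - t) • x₂) = t • ρ g x₁ + (1 - t) • ρ g x₂) :
    (∀ C : Set X, C ⊆ Q → C.Nonempty → IsClosed C → Convex ℝ C →
        (∀ g : G, MapsTo (ρ g) C C) → C = Q) ↔
      ∀ x ∈ Q, closure (Q.extremePoints ℝ) ⊆ closure {y | ∃ g : G, y = ρ g x} := by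
  have hρcont : ∀ g : G, ContinuousOn (ρ g) Q := fun g =>
    hcont.comp (continuous_const.prodMk continuous_id).continuousOn fun y hy => ⟨mem_univ g, hy⟩
  refine (isIrreducibleRep_iff_forall_subset_closure_convexHull_orbit hQconv hQcomp.isClosed hmaps
    hρcont hmul haff).trans (forall₂_congr fun x hx => ?_)
  rw [isClosed_closure.closure_subset_iff]
  refine subset_closure_convexHull_iff_extremePoints_subset_closure_of_separatingDual hQcomp hQconv ?_
  rintro _ ⟨g, rfl⟩
  exact hmaps g hx

/-- An affine representation `(G,Q)` of a topological group `G` is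
irreducible if and only if for every `x ∈ Q` the closure of the orbit `Gx` contains the
closure of the set of extreme points of `Q`. -/
theorem stmt_2 {G X : Type*} [Group G] [TopologicalSpace G] [IsTopologicalGroup G]
    [AddCommGroup X] [Module ℝ X] [TopologicalSpace X]
    [IsTopologicalAddGroup X] [ContinuousSMul ℝ X] [T2Space X] [SeparatingDual ℝ X]
    (Q : Set X) (hQne : Q.Nonempty) (hQcomp : IsCompact Q) (hQconv : Convex ℝ Q)
    (ρ : G → X → X)
    (hmaps : ∀ g : G, MapsTo (ρ g) Q Q)
    (hcont : ContinuousOn (fun p : G × X => ρ p.1 p.2) (univ ×ˢ Q))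
    (hone : ∀ x ∈ Q, ρ 1 x = x)
    (hmul : ∀ g h : G, ∀ x ∈ Q, ρ (g * h) x = ρ g (ρ h x))
    (haff : ∀ g : G, ∀ x₁ ∈ Q, ∀ x₂ ∈ Q, ∀ t : ℝ, 0 ≤ t → t ≤ 1 →
      ρ g (t • x₁ + (1 - t) • x₂) = t • ρ g x₁ + (1 - t) • ρ g x₂) :
    (∀ C : Set X, C ⊆ Q → C.Nonempty → IsClosed C → Convex ℝ C →
        (∀ g : G, MapsTo (ρ g) C C) → C = Q) ↔
      ∀ x ∈ Q, closure (Q.extremePoints ℝ) ⊆ closure {y | ∃ g : G, y = ρ g x} :=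
  stmt_2_general Q hQcomp hQconv ρ hmaps hcont hmul haff
end

section
/- Let a topological group G act continuously and strongly proximally on a compact Hausdorff space X. Then for any points x₁, …, xₙ ∈ X, the closure of the G-orbit of the tuple (x₁, …, xₙ) in Xⁿ under the diagonal action contains the diagonal Δ(Xⁿ) = {(x, …, x) : x ∈ X}. -/
open MeasureTheory

/-- A continuous action of `G` on a compact Hausdorff space `X` is strongly proximal if for
every regular Borel probability measure `ν` on `X` and every `x ∈ X` the Dirac measure `δ_x`
lies in the weak-* closure of the pushforward orbit `{g_*ν : g ∈ G}`. -/
def StronglyProximalSMul (G : Type*) (X : Type*) [SMul G X]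
    [TopologicalSpace X] [MeasurableSpace X] [OpensMeasurableSpace X] : Prop :=
  ∀ ν : ProbabilityMeasure X, (ν : Measure X).Regular → ∀ x : X,
    (⟨Measure.dirac x, inferInstance⟩ : ProbabilityMeasure X) ∈
      closure {μ : ProbabilityMeasure X | ∃ g : G,
        (μ : Measure X) = (ν : Measure X).map (fun z => g • z)}

/-!
Apply strong proximality to the empirical measure `ν = (1/n) ∑ δ_{x i}`. Given a neighbourhood
`U` of `y`, the probability measures giving `Uᶜ` mass `< 1/n` form a neighbourhood of `δ_y`, so
some `g_*ν` lies in it. Since every `g • x i` carries mass at least `1/n` under `g_*ν`, all of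
them lie in `U`.
-/

open Filter Topology Set
open scoped ENNReal

lemma const_mem_closure_of_forall_nhds {ι X : Type*} [TopologicalSpace X] {S : Set (ι → X)}
    {y : X} (h : ∀ U ∈ 𝓝 y, ∃ p ∈ S, ∀ i, p i ∈ U) : (fun _ => y) ∈ closure S := by
  have hbasis := (𝓝 y).basis_sets.pi_self (ι := ι)
  rw [← nhds_pi] at hbasis
  rw [mem_closure_iff_nhds_basis hbasis]
  rintro ⟨I, U⟩ ⟨-, hU⟩
  obtain ⟨p, hpS, hpU⟩ := h U hU
  exact ⟨p, hpS, fun i _ => hpU i⟩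

namespace MeasureTheory

lemma ProbabilityMeasure.eventually_nhds_diracProba_measure_compl_lt {X : Type*}
    [TopologicalSpace X] [CompletelyRegularSpace X] [MeasurableSpace X] [OpensMeasurableSpace X]
    {y : X} {U : Set X} (hU : U ∈ 𝓝 y) {ε : ℝ≥0∞} (hε : 0 < ε) :
    ∀ᶠ μ : ProbabilityMeasure X in 𝓝 (diracProba y), (μ : Measure X) Uᶜ < ε := by
  obtain ⟨f, hfy, hf⟩ := CompletelyRegularSpace.exists_BCNN isOpen_interior.isClosed_compl
    (not_not.2 (mem_interior_iff_mem_nhds.2 hU))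
  -- `1 - f` vanishes at `y` and dominates the indicator of `(interior U)ᶜ`.
  have hlim := ProbabilityMeasure.tendsto_iff_forall_lintegral_tendsto.1
    (tendsto_id (x := 𝓝 (diracProba y))) (1 - f)
  rw [diracProba, ProbabilityMeasure.coe_mk,
    lintegral_dirac' _ (1 - f).continuous.measurable.coe_nnreal_ennreal] at hlim
  refine (hlim.eventually (gt_mem_nhds (by simpa [hfy] using hε))).mono fun μ hμ => ?_
  calc (μ : Measure X) Uᶜ ≤ (μ : Measure X) (interior U)ᶜ :=
        measure_mono (compl_subset_compl.2 interior_subset)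
    _ = ∫⁻ z, (interior U)ᶜ.indicator 1 z ∂μ :=
        (lintegral_indicator_one isOpen_interior.isClosed_compl.measurableSet).symm
    _ ≤ ∫⁻ z, ((1 - f) z : ℝ≥0∞) ∂μ := lintegral_mono fun z => by
        by_cases hz : z ∈ (interior U)ᶜ <;> simp [hz, hf]
    _ < ε := hμ

instance Measure.dirac.instInnerRegular {X : Type*} [TopologicalSpace X] [MeasurableSpace X]
    (x : X) : (Measure.dirac x).InnerRegular := by
  refine ⟨fun s hs r hr => ⟨{x}, ?_, isCompact_singleton, ?_⟩⟩
  · by_contra hx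
    simp_all [Measure.dirac_apply' _ hs]
  · exact hr.trans_le (by rw [Measure.dirac_apply_of_mem (mem_singleton x)]; exact prob_le_one)

noncomputable def empiricalMeasure {ι X : Type*} [Fintype ι] [MeasurableSpace X] (x : ι → X) :
    Measure X :=
  (Fintype.card ι : ℝ≥0∞)⁻¹ • ∑ i, Measure.dirac (x i)

section empiricalMeasure

variable {ι X : Type*} [Fintype ι] [MeasurableSpace X] (x : ι → X)

instance [Nonempty ι] : IsProbabilityMeasure (empiricalMeasure x) := by
  constructor
  simp only [empiricalMeasure, Measure.smul_apply, Measure.finsetSum_apply, measure_univ,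
    Finset.sum_const, Finset.card_univ, nsmul_eq_mul, mul_one, smul_eq_mul]
  exact ENNReal.inv_mul_cancel (by simp) (by simp)

instance [TopologicalSpace X] : (empiricalMeasure x).InnerRegular := by
  unfold empiricalMeasure; infer_instance

lemma inv_card_le_empiricalMeasure_apply {i : ι} {s : Set X} (hi : x i ∈ s) :
    (Fintype.card ι : ℝ≥0∞)⁻¹ ≤ empiricalMeasure x s := by
  rw [empiricalMeasure, Measure.smul_apply, Measure.finsetSum_apply, smul_eq_mul]
  calc (Fintype.card ι : ℝ≥0∞)⁻¹ = (Fintype.card ι : ℝ≥0∞)⁻¹ * Measure.dirac (x i) s := by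
        rw [Measure.dirac_apply_of_mem hi, mul_one]
    _ ≤ _ := by
        gcongr
        exact Finset.single_le_sum (f := fun j => Measure.dirac (x j) s) (by simp)
          (Finset.mem_univ i)

end empiricalMeasure

end MeasureTheory

theorem stmt_3_general {G X : Type*} [Group G] [TopologicalSpace G]
    [TopologicalSpace X] [CompactSpace X] [T2Space X]
    [MeasurableSpace X] [BorelSpace X]
    [MulAction G X] [ContinuousSMul G X]
    (hsp : StronglyProximalSMul G X)
    (n : ℕ) (x : Fin n → X) (y : X) :
    (fun _ : Fin n => y) ∈ closure {p : Fin n → X | ∃ g : G, p = fun i => g • x i} := by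
  rcases isEmpty_or_nonempty (Fin n) with hn | hn
  · exact subset_closure ⟨1, Subsingleton.elim _ _⟩
  let ν : ProbabilityMeasure X := ⟨empiricalMeasure x, inferInstance⟩
  have hδ : diracProba y ∈ closure {μ : ProbabilityMeasure X | ∃ g : G,
      (μ : Measure X) = (ν : Measure X).map (g • ·)} :=
    hsp ν (inferInstance : (empiricalMeasure x).Regular) y
  refine const_mem_closure_of_forall_nhds fun U hU => ?_
  obtain ⟨μ, hμU : (μ : Measure X) Uᶜ < _, g, hμg⟩ :=
    mem_closure_iff_nhds.1 hδ _ (ProbabilityMeasure.eventually_nhds_diracProba_measure_compl_lt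
      hU (ENNReal.inv_pos.2 (ENNReal.natCast_ne_top (Fintype.card (Fin n)))))
  refine ⟨fun i => g • x i, ⟨g, rfl⟩, fun i => not_not.1 fun hi => hμU.not_ge ?_⟩
  calc _ ≤ empiricalMeasure x ((g • ·) ⁻¹' Uᶜ) := inv_card_le_empiricalMeasure_apply x hi
    _ ≤ (ν : Measure X).map (g • ·) Uᶜ := Measure.le_map_apply (by fun_prop) _
    _ = (μ : Measure X) Uᶜ := by rw [hμg]

/-- Let a topological group `G` act continuously and strongly proximally on a
compact Hausdorff space `X`.  Then for any points `x₁, …, xₙ ∈ X`, the closure of the `G`-orbit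
of the tuple `(x₁, …, xₙ)` in `Xⁿ` under the diagonal action contains the diagonal
`Δ(Xⁿ) = {(x, …, x) : x ∈ X}`. -/
theorem stmt_3 {G X : Type*} [Group G] [TopologicalSpace G] [IsTopologicalGroup G]
    [TopologicalSpace X] [CompactSpace X] [T2Space X]
    [MeasurableSpace X] [BorelSpace X]
    [MulAction G X] [ContinuousSMul G X]
    (hsp : StronglyProximalSMul G X)
    (n : ℕ) (x : Fin n → X) (y : X) :
    (fun _ : Fin n => y) ∈ closure {p : Fin n → X | ∃ g : G, p = fun i => g • x i} :=
  stmt_3_general hsp n x y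
end

section
/- If (G,Q₁) and (G,Q₂) are irreducible affine representations of a topological group G and φ₁, φ₂ : Q₁ → Q₂ are affine homomorphisms, then φ₁ = φ₂. -/
/-!
Averaging two affine homomorphisms `φ₁, φ₂ : Q₁ → Q₂` gives a third one, `ψ = (φ₁ + φ₂) / 2`.
The image of an affine homomorphism is a nonempty compact convex invariant subset of the target,
so by irreducibility of `Q₂` it is all of `Q₂`. In particular an extreme point `e` of `Q₂`
(Krein–Milman, applied in the weak topology) is `ψ x₀`, the midpoint of `φ₁ x₀` and `φ₂ x₀`,
which forces `φ₁ x₀ = φ₂ x₀`. The coincidence set of `φ₁` and `φ₂` is then a nonempty closed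
convex invariant subset of `Q₁`, hence all of `Q₁` by irreducibility.
-/

open Set

theorem IsCompact.extremePoints_nonempty_of_separatingDual {E : Type*} [AddCommGroup E]
    [Module ℝ E] [TopologicalSpace E] [SeparatingDual ℝ E] {s : Set E} (hs : IsCompact s)
    (hne : s.Nonempty) : (s.extremePoints ℝ).Nonempty := by
  have : LocallyConvexSpace ℝ (WeakSpace ℝ E) :=
    WeakBilin.locallyConvexSpace (B := (topDualPairing ℝ E).flip)
  have hcont : Continuous (toWeakSpace ℝ E) := (toWeakSpaceCLM ℝ E).continuous
  have := (hs.image hcont).extremePoints_nonempty (hne.image _)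
  rw [← image_extremePoints] at this
  exact this.of_image

theorem eq_of_midpoint_mem_extremePoints {E : Type*} [AddCommGroup E] [Module ℝ E] {A : Set E}
    {a b : E} (ha : a ∈ A) (hb : b ∈ A) (h : midpoint ℝ a b ∈ A.extremePoints ℝ) : a = b := by
  have hab := h.2 ha hb (midpoint_mem_openSegment a b)
  have hba := h.2 hb ha (midpoint_comm (R := ℝ) a b ▸ midpoint_mem_openSegment b a)
  exact hab.trans hba.symm

theorem IsCompact.isClosed_sep_eq {X Y : Type*} [TopologicalSpace X] [T2Space X]
    [TopologicalSpace Y] [T2Space Y] {f g : X → Y} {Q : Set X} (hQ : IsCompact Q)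
    (hf : ContinuousOn f Q) (hg : ContinuousOn g Q) : IsClosed {x ∈ Q | f x = g x} :=
  (hf.prodMk hg).preimage_isClosed_of_isClosed hQ.isClosed isClosed_diagonal

theorem ContinuousOn.midpoint {X Y : Type*} [TopologicalSpace X] [AddCommGroup Y] [Module ℝ Y]
    [TopologicalSpace Y] [IsTopologicalAddGroup Y] [ContinuousSMul ℝ Y] {f g : X → Y} {s : Set X}
    (hf : ContinuousOn f s) (hg : ContinuousOn g s) :
    ContinuousOn (fun x => midpoint ℝ (f x) (g x)) s :=
  hf.lineMap hg continuousOn_const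

section Affine

variable {X Y : Type*} [AddCommGroup X] [Module ℝ X] [AddCommGroup Y] [Module ℝ Y]

def IsAffineOn (f : X → Y) (Q : Set X) : Prop :=
  ∀ x₁ ∈ Q, ∀ x₂ ∈ Q, ∀ t : ℝ, 0 ≤ t → t ≤ 1 →
    f (t • x₁ + (1 - t) • x₂) = t • f x₁ + (1 - t) • f x₂

namespace IsAffineOn

variable {f g : X → Y} {Q : Set X}

theorem map_add_smul (hf : IsAffineOn f Q) {x y : X} (hx : x ∈ Q) (hy : y ∈ Q) {a b : ℝ}
    (ha : 0 ≤ a) (hb : 0 ≤ b) (hab : a + b = 1) : f (a • x + b • y) = a • f x + b • f y := by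
  obtain rfl : b = 1 - a := eq_sub_of_add_eq' hab
  exact hf x hx y hy a ha (by linarith)

theorem map_midpoint (hf : IsAffineOn f Q) {x y : X} (hx : x ∈ Q) (hy : y ∈ Q) :
    f (midpoint ℝ x y) = midpoint ℝ (f x) (f y) := by
  simpa only [midpoint_eq_smul_add, smul_add, invOf_eq_inv]
    using hf.map_add_smul hx hy (a := 2⁻¹) (b := 2⁻¹) (by norm_num) (by norm_num) (by norm_num)

protected theorem midpoint (hf : IsAffineOn f Q) (hg : IsAffineOn g Q) :
    IsAffineOn (fun x => midpoint ℝ (f x) (g x)) Q := by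
  intro x₁ hx₁ x₂ hx₂ t ht₀ ht₁
  simp only [midpoint_eq_smul_add, hf x₁ hx₁ x₂ hx₂ t ht₀ ht₁, hg x₁ hx₁ x₂ hx₂ t ht₀ ht₁]
  module

theorem convex_image (hf : IsAffineOn f Q) (hQ : Convex ℝ Q) : Convex ℝ (f '' Q) := by
  rintro - ⟨x, hx, rfl⟩ - ⟨y, hy, rfl⟩ a b ha hb hab
  exact ⟨a • x + b • y, hQ hx hy ha hb hab, hf.map_add_smul hx hy ha hb hab⟩

theorem convex_sep_eq (hf : IsAffineOn f Q) (hg : IsAffineOn g Q) (hQ : Convex ℝ Q) :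
    Convex ℝ {x ∈ Q | f x = g x} := by
  rintro x ⟨hx, hfgx⟩ y ⟨hy, hfgy⟩ a b ha hb hab
  refine ⟨hQ hx hy ha hb hab, ?_⟩
  rw [hf.map_add_smul hx hy ha hb hab, hg.map_add_smul hx hy ha hb hab, hfgx, hfgy]

end IsAffineOn

end Affine

section Representation

variable {G X Y : Type*} [AddCommGroup X] [Module ℝ X] [TopologicalSpace X]
  [AddCommGroup Y] [Module ℝ Y] [TopologicalSpace Y]

def IsIrreducibleOn (ρ : G → X → X) (Q : Set X) : Prop :=
  ∀ C : Set X, C ⊆ Q → C.Nonempty → IsClosed C → Convex ℝ C → (∀ g : G, MapsTo (ρ g) C C) →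
    C = Q

variable {ρ₁ : G → X → X} {ρ₂ : G → Y → Y} {Q₁ : Set X} {Q₂ : Set Y}

theorem IsIrreducibleOn.image_eq [T2Space Y] (hirr : IsIrreducibleOn ρ₂ Q₂)
    (hQ₁ne : Q₁.Nonempty) (hQ₁comp : IsCompact Q₁) (hQ₁conv : Convex ℝ Q₁)
    (hmaps₁ : ∀ g : G, MapsTo (ρ₁ g) Q₁ Q₁) {φ : X → Y} (hφmaps : MapsTo φ Q₁ Q₂)
    (hφcont : ContinuousOn φ Q₁) (hφaff : IsAffineOn φ Q₁)
    (hφequiv : ∀ g : G, ∀ x ∈ Q₁, φ (ρ₁ g x) = ρ₂ g (φ x)) : φ '' Q₁ = Q₂ := by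
  refine hirr _ hφmaps.image_subset (hQ₁ne.image φ)
    (hQ₁comp.image_of_continuousOn hφcont).isClosed (hφaff.convex_image hQ₁conv) ?_
  rintro g - ⟨x, hx, rfl⟩
  exact ⟨ρ₁ g x, hmaps₁ g hx, hφequiv g x hx⟩

theorem IsIrreducibleOn.eqOn_of_eq [T2Space X] [T2Space Y] (hirr : IsIrreducibleOn ρ₁ Q₁)
    (hQ₁comp : IsCompact Q₁) (hQ₁conv : Convex ℝ Q₁) (hmaps₁ : ∀ g : G, MapsTo (ρ₁ g) Q₁ Q₁)
    {φ₁ φ₂ : X → Y} (hφ₁cont : ContinuousOn φ₁ Q₁) (hφ₂cont : ContinuousOn φ₂ Q₁)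
    (hφ₁aff : IsAffineOn φ₁ Q₁) (hφ₂aff : IsAffineOn φ₂ Q₁)
    (hφ₁equiv : ∀ g : G, ∀ x ∈ Q₁, φ₁ (ρ₁ g x) = ρ₂ g (φ₁ x))
    (hφ₂equiv : ∀ g : G, ∀ x ∈ Q₁, φ₂ (ρ₁ g x) = ρ₂ g (φ₂ x))
    {x₀ : X} (hx₀ : x₀ ∈ Q₁) (hφx₀ : φ₁ x₀ = φ₂ x₀) : EqOn φ₁ φ₂ Q₁ := by
  have hC : {x ∈ Q₁ | φ₁ x = φ₂ x} = Q₁ := by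
    refine hirr _ (sep_subset _ _) ⟨x₀, hx₀, hφx₀⟩ (hQ₁comp.isClosed_sep_eq hφ₁cont hφ₂cont)
      (hφ₁aff.convex_sep_eq hφ₂aff hQ₁conv) ?_
    rintro g x ⟨hx, hφx⟩
    exact ⟨hmaps₁ g hx, by rw [hφ₁equiv g x hx, hφ₂equiv g x hx, hφx]⟩
  intro x hx
  exact (hC.symm ▸ hx : x ∈ {x ∈ Q₁ | φ₁ x = φ₂ x}).2

end Representation

theorem stmt_6_general {G X₁ X₂ : Type*}
    [AddCommGroup X₁] [Module ℝ X₁] [TopologicalSpace X₁] [T2Space X₁]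
    [AddCommGroup X₂] [Module ℝ X₂] [TopologicalSpace X₂]
    [IsTopologicalAddGroup X₂] [ContinuousSMul ℝ X₂] [T2Space X₂] [SeparatingDual ℝ X₂]
    -- the irreducible affine representation `(G, Q₁)`
    (Q₁ : Set X₁) (hQ₁ne : Q₁.Nonempty) (hQ₁comp : IsCompact Q₁) (hQ₁conv : Convex ℝ Q₁)
    (ρ₁ : G → X₁ → X₁)
    (hmaps₁ : ∀ g : G, MapsTo (ρ₁ g) Q₁ Q₁)
    (hirr₁ : ∀ C : Set X₁, C ⊆ Q₁ → C.Nonempty → IsClosed C → Convex ℝ C →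
      (∀ g : G, MapsTo (ρ₁ g) C C) → C = Q₁)
    -- the irreducible affine representation `(G, Q₂)`
    (Q₂ : Set X₂) (hQ₂ne : Q₂.Nonempty) (hQ₂comp : IsCompact Q₂) (hQ₂conv : Convex ℝ Q₂)
    (ρ₂ : G → X₂ → X₂)
    (haff₂ : ∀ g : G, ∀ x₁ ∈ Q₂, ∀ x₂ ∈ Q₂, ∀ t : ℝ, 0 ≤ t → t ≤ 1 →
      ρ₂ g (t • x₁ + (1 - t) • x₂) = t • ρ₂ g x₁ + (1 - t) • ρ₂ g x₂)
    (hirr₂ : ∀ C : Set X₂, C ⊆ Q₂ → C.Nonempty → IsClosed C → Convex ℝ C →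
      (∀ g : G, MapsTo (ρ₂ g) C C) → C = Q₂)
    -- two affine homomorphisms `φ₁, φ₂ : Q₁ → Q₂`
    (φ₁ φ₂ : X₁ → X₂)
    (hφ₁maps : MapsTo φ₁ Q₁ Q₂) (hφ₁cont : ContinuousOn φ₁ Q₁)
    (hφ₁aff : ∀ x₁ ∈ Q₁, ∀ x₂ ∈ Q₁, ∀ t : ℝ, 0 ≤ t → t ≤ 1 →
      φ₁ (t • x₁ + (1 - t) • x₂) = t • φ₁ x₁ + (1 - t) • φ₁ x₂)
    (hφ₁equiv : ∀ g : G, ∀ x ∈ Q₁, φ₁ (ρ₁ g x) = ρ₂ g (φ₁ x))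
    (hφ₂maps : MapsTo φ₂ Q₁ Q₂) (hφ₂cont : ContinuousOn φ₂ Q₁)
    (hφ₂aff : ∀ x₁ ∈ Q₁, ∀ x₂ ∈ Q₁, ∀ t : ℝ, 0 ≤ t → t ≤ 1 →
      φ₂ (t • x₁ + (1 - t) • x₂) = t • φ₂ x₁ + (1 - t) • φ₂ x₂)
    (hφ₂equiv : ∀ g : G, ∀ x ∈ Q₁, φ₂ (ρ₁ g x) = ρ₂ g (φ₂ x)) :
    EqOn φ₁ φ₂ Q₁ := by
  set ψ : X₁ → X₂ := fun x => midpoint ℝ (φ₁ x) (φ₂ x)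
  have hψ : ψ '' Q₁ = Q₂ := by
    refine IsIrreducibleOn.image_eq hirr₂ hQ₁ne hQ₁comp hQ₁conv hmaps₁
      (fun x hx => hQ₂conv.midpoint_mem (hφ₁maps hx) (hφ₂maps hx))
      (hφ₁cont.midpoint hφ₂cont) (IsAffineOn.midpoint hφ₁aff hφ₂aff) ?_
    intro g x hx
    simp only [ψ, hφ₁equiv g x hx, hφ₂equiv g x hx,
      IsAffineOn.map_midpoint (haff₂ g) (hφ₁maps hx) (hφ₂maps hx)]
  obtain ⟨e, he⟩ := hQ₂comp.extremePoints_nonempty_of_separatingDual hQ₂ne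
  obtain ⟨x₀, hx₀, rfl⟩ : e ∈ ψ '' Q₁ := hψ ▸ he.1
  exact IsIrreducibleOn.eqOn_of_eq hirr₁ hQ₁comp hQ₁conv hmaps₁ hφ₁cont hφ₂cont hφ₁aff hφ₂aff
    hφ₁equiv hφ₂equiv hx₀ (eq_of_midpoint_mem_extremePoints (hφ₁maps hx₀) (hφ₂maps hx₀) he)

/-- If `(G,Q₁)` and `(G,Q₂)` are irreducible affine representations of a
topological group `G` and `φ₁, φ₂ : Q₁ → Q₂` are affine homomorphisms (continuous, affine,
`G`-equivariant maps), then `φ₁ = φ₂`. -/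
theorem stmt_6 {G X₁ X₂ : Type*} [Group G] [TopologicalSpace G] [IsTopologicalGroup G]
    [AddCommGroup X₁] [Module ℝ X₁] [TopologicalSpace X₁]
    [IsTopologicalAddGroup X₁] [ContinuousSMul ℝ X₁] [T2Space X₁] [SeparatingDual ℝ X₁]
    [AddCommGroup X₂] [Module ℝ X₂] [TopologicalSpace X₂]
    [IsTopologicalAddGroup X₂] [ContinuousSMul ℝ X₂] [T2Space X₂] [SeparatingDual ℝ X₂]
    -- the irreducible affine representation `(G, Q₁)`
    (Q₁ : Set X₁) (hQ₁ne : Q₁.Nonempty) (hQ₁comp : IsCompact Q₁) (hQ₁conv : Convex ℝ Q₁)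
    (ρ₁ : G → X₁ → X₁)
    (hmaps₁ : ∀ g : G, MapsTo (ρ₁ g) Q₁ Q₁)
    (hcont₁ : ContinuousOn (fun p : G × X₁ => ρ₁ p.1 p.2) (univ ×ˢ Q₁))
    (hone₁ : ∀ x ∈ Q₁, ρ₁ 1 x = x)
    (hmul₁ : ∀ g h : G, ∀ x ∈ Q₁, ρ₁ (g * h) x = ρ₁ g (ρ₁ h x))
    (haff₁ : ∀ g : G, ∀ x₁ ∈ Q₁, ∀ x₂ ∈ Q₁, ∀ t : ℝ, 0 ≤ t → t ≤ 1 →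
      ρ₁ g (t • x₁ + (1 - t) • x₂) = t • ρ₁ g x₁ + (1 - t) • ρ₁ g x₂)
    (hirr₁ : ∀ C : Set X₁, C ⊆ Q₁ → C.Nonempty → IsClosed C → Convex ℝ C →
      (∀ g : G, MapsTo (ρ₁ g) C C) → C = Q₁)
    -- the irreducible affine representation `(G, Q₂)`
    (Q₂ : Set X₂) (hQ₂ne : Q₂.Nonempty) (hQ₂comp : IsCompact Q₂) (hQ₂conv : Convex ℝ Q₂)
    (ρ₂ : G → X₂ → X₂)
    (hmaps₂ : ∀ g : G, MapsTo (ρ₂ g) Q₂ Q₂)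
    (hcont₂ : ContinuousOn (fun p : G × X₂ => ρ₂ p.1 p.2) (univ ×ˢ Q₂))
    (hone₂ : ∀ x ∈ Q₂, ρ₂ 1 x = x)
    (hmul₂ : ∀ g h : G, ∀ x ∈ Q₂, ρ₂ (g * h) x = ρ₂ g (ρ₂ h x))
    (haff₂ : ∀ g : G, ∀ x₁ ∈ Q₂, ∀ x₂ ∈ Q₂, ∀ t : ℝ, 0 ≤ t → t ≤ 1 →
      ρ₂ g (t • x₁ + (1 - t) • x₂) = t • ρ₂ g x₁ + (1 - t) • ρ₂ g x₂)
    (hirr₂ : ∀ C : Set X₂, C ⊆ Q₂ → C.Nonempty → IsClosed C → Convex ℝ C →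
      (∀ g : G, MapsTo (ρ₂ g) C C) → C = Q₂)
    -- two affine homomorphisms `φ₁, φ₂ : Q₁ → Q₂`
    (φ₁ φ₂ : X₁ → X₂)
    (hφ₁maps : MapsTo φ₁ Q₁ Q₂) (hφ₁cont : ContinuousOn φ₁ Q₁)
    (hφ₁aff : ∀ x₁ ∈ Q₁, ∀ x₂ ∈ Q₁, ∀ t : ℝ, 0 ≤ t → t ≤ 1 →
      φ₁ (t • x₁ + (1 - t) • x₂) = t • φ₁ x₁ + (1 - t) • φ₁ x₂)
    (hφ₁equiv : ∀ g : G, ∀ x ∈ Q₁, φ₁ (ρ₁ g x) = ρ₂ g (φ₁ x))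
    (hφ₂maps : MapsTo φ₂ Q₁ Q₂) (hφ₂cont : ContinuousOn φ₂ Q₁)
    (hφ₂aff : ∀ x₁ ∈ Q₁, ∀ x₂ ∈ Q₁, ∀ t : ℝ, 0 ≤ t → t ≤ 1 →
      φ₂ (t • x₁ + (1 - t) • x₂) = t • φ₂ x₁ + (1 - t) • φ₂ x₂)
    (hφ₂equiv : ∀ g : G, ∀ x ∈ Q₁, φ₂ (ρ₁ g x) = ρ₂ g (φ₂ x)) :
    EqOn φ₁ φ₂ Q₁ :=
  stmt_6_general Q₁ hQ₁ne hQ₁comp hQ₁conv ρ₁ hmaps₁ hirr₁ Q₂ hQ₂ne hQ₂comp hQ₂conv ρ₂ haff₂ hirr₂ φ₁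
    φ₂ hφ₁maps hφ₁cont hφ₁aff hφ₁equiv hφ₂maps hφ₂cont hφ₂aff hφ₂equiv
end

section
/- Let (G,V,τ) be an irreducible conic representation of a topological group G and let Q₁ and Q₂ be two G-invariant compact sections of V. Then Q₂ = a·Q₁ = {a·x : x ∈ Q₁} for some real number a > 0; in particular Q₁ and Q₂ are isomorphic as affine representations of G. -/
open Set

/-- `Q` is a section of the cone `V`, defined by the continuous conic (additive, positively
homogeneous, nonnegative) function `L`, which is strictly positive away from `0`. -/
structure IsConicSection {X : Type*} [AddCommGroup X] [Module ℝ X] [TopologicalSpace X]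
    (V : Set X) (L : X → ℝ) (Q : Set X) : Prop where
  continuousOn : ContinuousOn L V
  nonneg : ∀ x ∈ V, 0 ≤ L x
  map_add : ∀ x ∈ V, ∀ y ∈ V, L (x + y) = L x + L y
  map_smul : ∀ x ∈ V, ∀ a : ℝ, 0 ≤ a → L (a • x) = a * L x
  pos : ∀ x ∈ V, x ≠ 0 → 0 < L x
  sect_eq : Q = {x ∈ V | L x = 1}

/-- A conic representation of a topological group `G`: a nonzero cone `V` (a subset of a real
topological vector space closed under nonnegative linear combinations) admitting a compact
section, together with a continuous action `τ` of `G` on `V` by maps preserving nonnegative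
linear combinations. -/
structure IsConicRep (G : Type*) {X : Type*} [Group G] [TopologicalSpace G]
    [AddCommGroup X] [Module ℝ X] [TopologicalSpace X]
    (V : Set X) (τ : G → X → X) : Prop where
  nonempty : V.Nonempty
  ne_zero : V ≠ {0}
  cone : ∀ x ∈ V, ∀ y ∈ V, ∀ a b : ℝ, 0 ≤ a → 0 ≤ b → a • x + b • y ∈ V
  mapsTo : ∀ g : G, MapsTo (τ g) V V
  continuousOn : ContinuousOn (fun p : G × X => τ p.1 p.2) (univ ×ˢ V)
  act_one : ∀ x ∈ V, τ 1 x = x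
  act_mul : ∀ g h : G, ∀ x ∈ V, τ (g * h) x = τ g (τ h x)
  conic_act : ∀ g : G, ∀ x ∈ V, ∀ y ∈ V, ∀ a b : ℝ, 0 ≤ a → 0 ≤ b →
    τ g (a • x + b • y) = a • τ g x + b • τ g y
  exists_compact_section : ∃ (L : X → ℝ) (Q : Set X), IsConicSection V L Q ∧ IsCompact Q

/-- A homomorphism of conic representations of `G`: a continuous map preserving nonnegative
linear combinations, vanishing only at `0`, and commuting with the group actions. -/
structure IsConicHom (G : Type*) {X₁ X₂ : Type*} [Group G]
    [AddCommGroup X₁] [Module ℝ X₁] [TopologicalSpace X₁]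
    [AddCommGroup X₂] [Module ℝ X₂] [TopologicalSpace X₂]
    (V₁ : Set X₁) (τ : G → X₁ → X₁) (V₂ : Set X₂) (η : G → X₂ → X₂)
    (φ : X₁ → X₂) : Prop where
  continuousOn : ContinuousOn φ V₁
  mapsTo : MapsTo φ V₁ V₂
  conic : ∀ x ∈ V₁, ∀ y ∈ V₁, ∀ a b : ℝ, 0 ≤ a → 0 ≤ b →
    φ (a • x + b • y) = a • φ x + b • φ y
  ne_zero : ∀ x ∈ V₁, x ≠ 0 → φ x ≠ 0
  equivariant : ∀ g : G, ∀ x ∈ V₁, φ (τ g x) = η g (φ x)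

/-- A conic representation is irreducible if its only nonzero closed `G`-invariant subcone
is the whole cone. -/
def IsIrreducibleConicRep (G : Type*) {X : Type*} [Group G]
    [AddCommGroup X] [Module ℝ X] [TopologicalSpace X]
    (V : Set X) (τ : G → X → X) : Prop :=
  ∀ W : Set X, W ⊆ V → W.Nonempty → W ≠ {0} → IsClosed W →
    (∀ x ∈ W, ∀ y ∈ W, ∀ a b : ℝ, 0 ≤ a → 0 ≤ b → a • x + b • y ∈ W) →
    (∀ g : G, MapsTo (τ g) W W) → W = V

/-- A conic representation is degenerate if it admits a `G`-invariant section. -/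
def IsDegenerateConicRep (G : Type*) {X : Type*} [Group G]
    [AddCommGroup X] [Module ℝ X] [TopologicalSpace X]
    (V : Set X) (τ : G → X → X) : Prop :=
  ∃ (L : X → ℝ) (Q : Set X), IsConicSection V L Q ∧ ∀ g : G, MapsTo (τ g) Q Q

open Filter Topology

/-! The gauge of a `G`-invariant section is itself `G`-invariant, so for two invariant sections
with gauges `L₁`, `L₂` and any `x₀ ≠ 0` in `V`, the set `{x ∈ V | L₂ x = c L₁ x}` with
`c = L₂ x₀ / L₁ x₀` is a nonzero `G`-invariant subcone. It is closed because a cone with a compact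
section is closed, so by irreducibility it is all of `V`. Hence `L₂ = c L₁` on `V`, and
`Q₂ = c⁻¹ Q₁`. -/

def IsCone {X : Type*} [AddCommGroup X] [Module ℝ X] (V : Set X) : Prop :=
  ∀ x ∈ V, ∀ y ∈ V, ∀ a b : ℝ, 0 ≤ a → 0 ≤ b → a • x + b • y ∈ V

section Cone

variable {X : Type*} [AddCommGroup X] [Module ℝ X] {V : Set X}

theorem IsCone.smul_mem (hV : IsCone V) {x : X} (hx : x ∈ V) {a : ℝ} (ha : 0 ≤ a) :
    a • x ∈ V := by
  simpa using hV x hx x hx a 0 ha le_rfl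

theorem IsCone.zero_mem (hV : IsCone V) (hne : V.Nonempty) : (0 : X) ∈ V := by
  obtain ⟨x, hx⟩ := hne
  simpa using hV.smul_mem hx le_rfl

theorem IsCone.exists_ne_zero (hV : IsCone V) (hne : V.Nonempty) (hV0 : V ≠ {0}) :
    ∃ x ∈ V, x ≠ 0 :=
  ((nontrivial_iff_ne_singleton (hV.zero_mem hne)).2 hV0).exists_ne 0

end Cone

namespace IsConicSection

variable {X : Type*} [AddCommGroup X] [Module ℝ X] [TopologicalSpace X] {V Q : Set X}
  {L : X → ℝ}

theorem mem_iff (hsec : IsConicSection V L Q) {x : X} : x ∈ Q ↔ x ∈ V ∧ L x = 1 := by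
  rw [hsec.sect_eq, mem_ofPred_eq]

theorem subset (hsec : IsConicSection V L Q) : Q ⊆ V := fun _ hx => (hsec.mem_iff.1 hx).1

theorem map_zero (hsec : IsConicSection V L Q) (h0 : (0 : X) ∈ V) : L 0 = 0 := by
  simpa using hsec.map_smul 0 h0 0 le_rfl

theorem map_smul_add_smul (hsec : IsConicSection V L Q) (hV : IsCone V) {x y : X}
    (hx : x ∈ V) (hy : y ∈ V) {a b : ℝ} (ha : 0 ≤ a) (hb : 0 ≤ b) :
    L (a • x + b • y) = a * L x + b * L y := by
  rw [hsec.map_add _ (hV.smul_mem hx ha) _ (hV.smul_mem hy hb), hsec.map_smul x hx a ha,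
    hsec.map_smul y hy b hb]

theorem inv_smul_mem (hsec : IsConicSection V L Q) (hV : IsCone V) {x : X} (hx : x ∈ V)
    (hx0 : x ≠ 0) : (L x)⁻¹ • x ∈ Q := by
  have hLx : 0 < L x := hsec.pos x hx hx0
  refine hsec.mem_iff.2 ⟨hV.smul_mem hx (inv_nonneg.2 hLx.le), ?_⟩
  rw [hsec.map_smul x hx _ (inv_nonneg.2 hLx.le), inv_mul_cancel₀ hLx.ne']

theorem apply_eq_of_mapsTo (hsec : IsConicSection V L Q) (hV : IsCone V) {f : X → X}
    (hf : ∀ x ∈ V, ∀ a : ℝ, 0 ≤ a → f (a • x) = a • f x) (hfQ : MapsTo f Q Q) :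
    ∀ x ∈ V, L (f x) = L x := by
  intro x hx
  by_cases hx0 : x = 0
  · subst hx0
    simpa using congrArg L (hf 0 hx 0 le_rfl)
  have hLx : 0 < L x := hsec.pos x hx hx0
  have hx' := hsec.inv_smul_mem hV hx hx0
  obtain ⟨hfx'V, hfx'L⟩ := hsec.mem_iff.1 (hfQ hx')
  have hfx : f x = L x • f ((L x)⁻¹ • x) := by
    rw [← hf _ (hsec.subset hx') _ hLx.le, smul_smul, mul_inv_cancel₀ hLx.ne', one_smul]
  rw [hfx, hsec.map_smul _ hfx'V _ hLx.le, hfx'L, mul_one]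

/-- Along an ultrafilter converging in `X`, the normalized points `(L x)⁻¹ • x` converge in `Q`,
which forces `L x` to stay bounded. -/
theorem isClosed [ContinuousSMul ℝ X] [T2Space X] (hsec : IsConicSection V L Q) (hV : IsCone V)
    (hQ : IsCompact Q) : IsClosed V := by
  refine isClosed_iff_ultrafilter.2 fun y u hy hVu => ?_
  have hy' : Tendsto id (u : Filter X) (𝓝 y) := hy
  have h0 : (0 : X) ∈ V := hV.zero_mem (u.nonempty_of_mem hVu)
  by_cases hy0 : y = 0
  · rwa [hy0]
  have hVu' : V \ {0} ∈ u := inter_mem hVu (hy (isOpen_compl_singleton.mem_nhds hy0))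
  set p : X → X := fun x => (L x)⁻¹ • x
  obtain ⟨q, hqQ, hq⟩ := hQ.ultrafilter_le_nhds' (u.map p)
    (Ultrafilter.mem_map.2 (mem_of_superset hVu' fun x hx => hsec.inv_smul_mem hV hx.1 hx.2))
  have hpq : Tendsto p (u : Filter X) (𝓝 q) := by rwa [Ultrafilter.coe_map] at hq
  have hq0 : q ≠ 0 := by
    rintro rfl
    simpa [hsec.map_zero h0] using (hsec.mem_iff.1 hqQ).2
  obtain ⟨M, hM⟩ : ∃ M, ∀ᶠ x in (u : Filter X), L x ≤ M := by
    by_contra! hunb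
    have hLtop : Tendsto L (u : Filter X) atTop := tendsto_atTop.2 fun M =>
      (hunb M).mono fun _ hx => hx.le
    exact hq0 (tendsto_nhds_unique hpq (by simpa using hLtop.inv_tendsto_atTop.smul hy'))
  obtain ⟨t, ht, hLt⟩ := isCompact_Icc.ultrafilter_le_nhds' (u.map L)
    ((hM.and hVu).mono fun x hx => ⟨hsec.nonneg x hx.2, hx.1⟩ : Icc 0 M ∈ u.map L)
  have hLt' : Tendsto L (u : Filter X) (𝓝 t) := by rwa [Ultrafilter.coe_map] at hLt
  have hyt : y = t • q := by
    refine tendsto_nhds_unique hy' ((hLt'.smul hpq).congr' ?_)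
    filter_upwards [hVu'] with x hx
    simp only [p, smul_smul, mul_inv_cancel₀ (hsec.pos x hx.1 hx.2).ne', one_smul, id]
  rw [hyt]
  exact hV.smul_mem (hsec.subset hqQ) ht.1

theorem image_smul_eq {L₂ : X → ℝ} {Q₂ : Set X} (hsec : IsConicSection V L Q)
    (hsec₂ : IsConicSection V L₂ Q₂) (hV : IsCone V) {c : ℝ} (hc : 0 < c)
    (hL : ∀ x ∈ V, L₂ x = c * L x) : Q₂ = (fun x => c⁻¹ • x) '' Q := by
  ext y
  rw [hsec₂.mem_iff]
  constructor
  · rintro ⟨hyV, hyL⟩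
    refine ⟨c • y, hsec.mem_iff.2 ⟨hV.smul_mem hyV hc.le, ?_⟩, ?_⟩
    · rw [hsec.map_smul y hyV c hc.le]
      linarith [hL y hyV]
    · simp only [smul_smul, inv_mul_cancel₀ hc.ne', one_smul]
  · rintro ⟨x, hxQ, rfl⟩
    obtain ⟨hxV, hxL⟩ := hsec.mem_iff.1 hxQ
    refine ⟨hV.smul_mem hxV (inv_nonneg.2 hc.le), ?_⟩
    rw [hL _ (hV.smul_mem hxV (inv_nonneg.2 hc.le)), hsec.map_smul x hxV _ (inv_nonneg.2 hc.le),
      hxL, mul_one, mul_inv_cancel₀ hc.ne']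

end IsConicSection

theorem IsConicRep.map_smul {G X : Type*} [Group G] [TopologicalSpace G] [AddCommGroup X]
    [Module ℝ X] [TopologicalSpace X] {V : Set X} {τ : G → X → X} (hrep : IsConicRep G V τ)
    (g : G) : ∀ x ∈ V, ∀ a : ℝ, 0 ≤ a → τ g (a • x) = a • τ g x := fun x hx a ha => by
  simpa using hrep.conic_act g x hx x hx a 0 ha le_rfl

theorem IsIrreducibleConicRep.exists_eq_mul {G X : Type*} [Group G] [AddCommGroup X]
    [Module ℝ X] [TopologicalSpace X] {V : Set X} {τ : G → X → X}
    (hirr : IsIrreducibleConicRep G V τ) (hV : IsCone V) (hVc : IsClosed V)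
    (hτ : ∀ g : G, MapsTo (τ g) V V) {L₁ L₂ : X → ℝ} {Q₁ Q₂ : Set X}
    (hsec₁ : IsConicSection V L₁ Q₁) (hsec₂ : IsConicSection V L₂ Q₂)
    (hinv₁ : ∀ g : G, ∀ x ∈ V, L₁ (τ g x) = L₁ x) (hinv₂ : ∀ g : G, ∀ x ∈ V, L₂ (τ g x) = L₂ x)
    (hne : ∃ x ∈ V, x ≠ 0) : ∃ c : ℝ, 0 < c ∧ ∀ x ∈ V, L₂ x = c * L₁ x := by
  obtain ⟨x₀, hx₀, hx₀0⟩ := hne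
  have h₁ := hsec₁.pos x₀ hx₀ hx₀0
  set c := L₂ x₀ / L₁ x₀
  set W := V ∩ (fun x => L₂ x - c * L₁ x) ⁻¹' {0}
  have hx₀W : x₀ ∈ W := ⟨hx₀, by simp [c, div_mul_cancel₀ _ h₁.ne']⟩
  have hWV : W = V := by
    refine hirr W inter_subset_left ⟨x₀, hx₀W⟩ (fun h => hx₀0 (h ▸ hx₀W :)) ?_ ?_ ?_
    · exact (hsec₂.continuousOn.sub (continuousOn_const.mul hsec₁.continuousOn))
        |>.preimage_isClosed_of_isClosed hVc isClosed_singleton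
    · rintro x ⟨hx, hxW⟩ y ⟨hy, hyW⟩ a b ha hb
      refine ⟨hV x hx y hy a b ha hb, ?_⟩
      simp only [mem_preimage, mem_singleton_iff, sub_eq_zero] at hxW hyW ⊢
      rw [hsec₁.map_smul_add_smul hV hx hy ha hb, hsec₂.map_smul_add_smul hV hx hy ha hb, hxW, hyW]
      ring
    · rintro g x ⟨hx, hxW⟩
      exact ⟨hτ g hx, by simpa [mem_preimage, hinv₁ g x hx, hinv₂ g x hx] using hxW⟩
  refine ⟨c, div_pos (hsec₂.pos x₀ hx₀ hx₀0) h₁, fun x hx => ?_⟩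
  have hxW : x ∈ W := hWV ▸ hx
  exact sub_eq_zero.1 hxW.2

theorem stmt_13_general {G X : Type*} [Group G] [TopologicalSpace G]
    [AddCommGroup X] [Module ℝ X] [TopologicalSpace X]
    [ContinuousSMul ℝ X] [T2Space X]
    (V : Set X) (τ : G → X → X) (hrep : IsConicRep G V τ)
    (hirr : IsIrreducibleConicRep G V τ)
    (L₁ : X → ℝ) (Q₁ : Set X) (hsec₁ : IsConicSection V L₁ Q₁) (hQ₁comp : IsCompact Q₁)
    (hQ₁inv : ∀ g : G, MapsTo (τ g) Q₁ Q₁)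
    (L₂ : X → ℝ) (Q₂ : Set X) (hsec₂ : IsConicSection V L₂ Q₂)
    (hQ₂inv : ∀ g : G, MapsTo (τ g) Q₂ Q₂) :
    ∃ a : ℝ, 0 < a ∧ Q₂ = (fun x => a • x) '' Q₁ ∧
      ∀ g : G, ∀ x ∈ Q₁, τ g (a • x) = a • τ g x := by
  have hV : IsCone V := hrep.cone
  obtain ⟨c, hc, hL⟩ := hirr.exists_eq_mul hV (hsec₁.isClosed hV hQ₁comp) hrep.mapsTo hsec₁ hsec₂
    (fun g => hsec₁.apply_eq_of_mapsTo hV (hrep.map_smul g) (hQ₁inv g))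
    (fun g => hsec₂.apply_eq_of_mapsTo hV (hrep.map_smul g) (hQ₂inv g))
    (hV.exists_ne_zero hrep.nonempty hrep.ne_zero)
  exact ⟨c⁻¹, inv_pos.2 hc, hsec₁.image_smul_eq hsec₂ hV hc hL,
    fun g x hx => hrep.map_smul g x (hsec₁.subset hx) _ (inv_nonneg.2 hc.le)⟩

/-- Let `(G,V,τ)` be an irreducible conic representation of a topological
group `G` and let `Q₁` and `Q₂` be two `G`-invariant compact sections of `V`.  Then
`Q₂ = a·Q₁ = {a·x : x ∈ Q₁}` for some real number `a > 0`; in particular the scaling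
`x ↦ a • x` intertwines the (affine) actions of `G` on `Q₁` and `Q₂`, so `Q₁` and `Q₂` are
isomorphic as affine representations of `G`. -/
theorem stmt_13 {G X : Type*} [Group G] [TopologicalSpace G] [IsTopologicalGroup G]
    [AddCommGroup X] [Module ℝ X] [TopologicalSpace X]
    [IsTopologicalAddGroup X] [ContinuousSMul ℝ X] [T2Space X] [SeparatingDual ℝ X]
    (V : Set X) (τ : G → X → X) (hrep : IsConicRep G V τ)
    (hirr : IsIrreducibleConicRep G V τ)
    (L₁ : X → ℝ) (Q₁ : Set X) (hsec₁ : IsConicSection V L₁ Q₁) (hQ₁comp : IsCompact Q₁)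
    (hQ₁inv : ∀ g : G, MapsTo (τ g) Q₁ Q₁)
    (L₂ : X → ℝ) (Q₂ : Set X) (hsec₂ : IsConicSection V L₂ Q₂) (hQ₂comp : IsCompact Q₂)
    (hQ₂inv : ∀ g : G, MapsTo (τ g) Q₂ Q₂) :
    ∃ a : ℝ, 0 < a ∧ Q₂ = (fun x => a • x) '' Q₁ ∧
      ∀ g : G, ∀ x ∈ Q₁, τ g (a • x) = a • τ g x :=
  stmt_13_general V τ hrep hirr L₁ Q₁ hsec₁ hQ₁comp hQ₁inv L₂ Q₂ hsec₂ hQ₂inv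
end

section
/- Let Y be a compact Hausdorff space with a continuous minimal action of a topological group G, and let σ : G × Y → ℝ>0 be a multiplier of this action that is bounded above. Then σ is a trivial multiplier: there exists a continuous function f : Y → ℝ>0 with σ(g,y) = f(g·y)/f(y) for all g ∈ G and y ∈ Y. -/
/-!
Put `F y = ⨆ g, σ g y` and `H y = ⨅ g, σ g y`; both are positive because a bounded multiplier is
also bounded below (`σ g y = (σ g⁻¹ (g • y))⁻¹`). Reindexing the supremum and the infimum by
`g ↦ g * γ` turns the cocycle identity into `F y = F (γ • y) * σ γ y` and
`H y = H (γ • y) * σ γ y`, so `F / H` is `G`-invariant. Since `F` is lower and `H` upper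
semicontinuous, `w ↦ H z * F w - F z * H w` is lower semicontinuous and vanishes on the dense orbit
of `z`, hence is `≤ 0`; by symmetry `F / H` is constant. So `H` is a constant multiple of `F`, hence
both upper and lower semicontinuous, i.e. continuous, and `1 / H` trivializes `σ`.
-/

open Set

section Semicontinuity

variable {X : Type*} [TopologicalSpace X]

theorem LowerSemicontinuous.le_of_dense {γ : Type*} [LinearOrder γ] {φ : X → γ}
    (hφ : LowerSemicontinuous φ) {s : Set X} (hs : Dense s) {c : γ} (hc : ∀ x ∈ s, φ x ≤ c)
    (x : X) : φ x ≤ c := by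
  have hclosed : IsClosed (φ ⁻¹' Iic c) := lowerSemicontinuous_iff_isClosed_preimage.1 hφ c
  have : closure s ⊆ φ ⁻¹' Iic c := hclosed.closure_subset_iff.2 hc
  exact this (hs.closure_eq ▸ mem_univ x)

theorem LowerSemicontinuous.const_mul {f : X → ℝ} (hf : LowerSemicontinuous f) {c : ℝ}
    (hc : 0 ≤ c) : LowerSemicontinuous fun x => c * f x :=
  (continuous_const_mul c).comp_lowerSemicontinuous hf (monotone_mul_left_of_nonneg hc)

theorem UpperSemicontinuous.neg_const_mul {h : X → ℝ} (hh : UpperSemicontinuous h) {c : ℝ}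
    (hc : 0 ≤ c) : LowerSemicontinuous fun x => -(c * h x) :=
  (continuous_const_mul c).neg.comp_upperSemicontinuous_antitone hh
    fun _ _ hab => neg_le_neg (mul_le_mul_of_nonneg_left hab hc)

end Semicontinuity

section DenseOrbits

variable {G Y : Type*} [Group G] [MulAction G Y] [TopologicalSpace Y]

theorem cross_mul_le_of_dense_orbits (hmin : ∀ y : Y, Dense {z : Y | ∃ g : G, z = g • y})
    {f h : Y → ℝ} (hf : LowerSemicontinuous f) (hh : UpperSemicontinuous h)
    (hf₀ : ∀ y, 0 ≤ f y) (hh₀ : ∀ y, 0 ≤ h y)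
    (hinv : ∀ (g : G) (y : Y), f (g • y) * h y = f y * h (g • y)) (y z : Y) :
    f y * h z ≤ f z * h y := by
  have hφ : LowerSemicontinuous fun w => h z * f w + -(f z * h w) :=
    (hf.const_mul (hh₀ z)).add (hh.neg_const_mul (hf₀ z))
  have horbit : ∀ w ∈ {w : Y | ∃ g : G, w = g • z}, h z * f w + -(f z * h w) ≤ 0 := by
    rintro _ ⟨g, rfl⟩
    linarith [hinv g z]
  linarith [hφ.le_of_dense (hmin z) horbit y]

theorem UpperSemicontinuous.continuous_of_dense_orbits
    (hmin : ∀ y : Y, Dense {z : Y | ∃ g : G, z = g • y})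
    {f h : Y → ℝ} (hf : LowerSemicontinuous f) (hh : UpperSemicontinuous h)
    (hf₀ : ∀ y, 0 < f y) (hh₀ : ∀ y, 0 ≤ h y)
    (hinv : ∀ (g : G) (y : Y), f (g • y) * h y = f y * h (g • y)) : Continuous h := by
  have hprop : ∀ y, h = fun w => h y / f y * f w := fun y => funext fun w => by
    have := cross_mul_le_of_dense_orbits hmin hf hh (fun y => (hf₀ y).le) hh₀ hinv y w
    have := cross_mul_le_of_dense_orbits hmin hf hh (fun y => (hf₀ y).le) hh₀ hinv w y
    field_simp [(hf₀ y).ne']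
    linarith
  refine continuous_iff_lower_upperSemicontinuous.2 ⟨fun y => ?_, hh⟩
  rw [hprop y]
  exact hf.const_mul (div_nonneg (hh₀ y) (hf₀ y).le) y

end DenseOrbits

section Multiplier

variable {G Y : Type*} [Group G] [MulAction G Y]

def IsMultiplier (σ : G → Y → ℝ) : Prop :=
  ∀ (g γ : G) (y : Y), σ (g * γ) y = σ g (γ • y) * σ γ y

namespace IsMultiplier

variable {σ : G → Y → ℝ} (hσ : IsMultiplier σ)
include hσ

theorem apply_one (hpos : ∀ g y, 0 < σ g y) (y : Y) : σ 1 y = 1 := by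
  have h := hσ 1 1 y
  rw [one_mul, one_smul] at h
  exact (mul_eq_left₀ (hpos 1 y).ne').1 h.symm

theorem apply_inv_smul (hpos : ∀ g y, 0 < σ g y) (g : G) (y : Y) :
    σ g⁻¹ (g • y) = (σ g y)⁻¹ := by
  have h := hσ g⁻¹ g y
  rw [inv_mul_cancel, hσ.apply_one hpos] at h
  exact eq_inv_of_mul_eq_one_left h.symm

theorem iInf_pos (hpos : ∀ g y, 0 < σ g y) {M : ℝ} (hM : ∀ g y, σ g y ≤ M) (y : Y) :
    0 < ⨅ g, σ g y := by
  have hM₀ : 0 < M := (hpos 1 y).trans_le (hM 1 y)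
  refine (inv_pos.2 hM₀).trans_le (le_ciInf fun g => ?_)
  rw [← inv_inv (σ g y), ← hσ.apply_inv_smul hpos]
  exact inv_anti₀ (hpos _ _) (hM _ _)

theorem iSup_smul_mul (γ : G) (y : Y) (hγ : 0 ≤ σ γ y) :
    (⨆ g, σ g (γ • y)) * σ γ y = ⨆ g, σ g y := by
  rw [Real.iSup_mul_of_nonneg hγ]
  exact (iSup_congr fun g => (hσ g γ y).symm).trans
    ((Equiv.mulRight γ).iSup_comp (g := fun g => σ g y))

theorem iInf_smul_mul (γ : G) (y : Y) (hγ : 0 ≤ σ γ y) :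
    (⨅ g, σ g (γ • y)) * σ γ y = ⨅ g, σ g y := by
  rw [Real.iInf_mul_of_nonneg hγ]
  exact (iInf_congr fun g => (hσ g γ y).symm).trans
    ((Equiv.mulRight γ).iInf_comp (g := fun g => σ g y))

end IsMultiplier

end Multiplier

theorem stmt_16_general {G Y : Type*} [Group G] [TopologicalSpace G]
    [TopologicalSpace Y]
    [MulAction G Y]
    -- the action is minimal: every orbit is dense
    (hmin : ∀ y : Y, Dense {z : Y | ∃ g : G, z = g • y})
    -- `σ` is a multiplier of the action
    (σ : G → Y → ℝ)
    (hσcont : Continuous fun p : G × Y => σ p.1 p.2)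
    (hσpos : ∀ (g : G) (y : Y), 0 < σ g y)
    (hσmult : ∀ (g γ : G) (y : Y), σ (g * γ) y = σ g (γ • y) * σ γ y)
    -- `σ` is bounded above
    (M : ℝ) (hσbdd : ∀ (g : G) (y : Y), σ g y ≤ M) :
    ∃ f : Y → ℝ, Continuous f ∧ (∀ y : Y, 0 < f y) ∧
      ∀ (g : G) (y : Y), σ g y = f (g • y) / f y := by
  have hσ : IsMultiplier σ := hσmult
  have hσg : ∀ g : G, Continuous (σ g) := fun g => hσcont.comp (Continuous.prodMk_right g)
  have hbdd : ∀ y, BddAbove (range fun g => σ g y) := fun y => ⟨M, forall_mem_range.2 (hσbdd · y)⟩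
  set F : Y → ℝ := fun y => ⨆ g, σ g y
  set H : Y → ℝ := fun y => ⨅ g, σ g y
  have hF : LowerSemicontinuous F :=
    lowerSemicontinuous_ciSup hbdd fun g => (hσg g).lowerSemicontinuous
  have hH : UpperSemicontinuous H :=
    upperSemicontinuous_ciInf (fun y => ⟨0, forall_mem_range.2 fun g => (hσpos g y).le⟩)
      fun g => (hσg g).upperSemicontinuous
  have hF₀ : ∀ y, 0 < F y := fun y => (hσpos 1 y).trans_le (le_ciSup (hbdd y) 1)
  have hH₀ : ∀ y, 0 < H y := hσ.iInf_pos hσpos hσbdd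
  have hFσ : ∀ (g : G) (y : Y), F (g • y) * σ g y = F y := fun g y =>
    hσ.iSup_smul_mul g y (hσpos g y).le
  have hHσ : ∀ (g : G) (y : Y), H (g • y) * σ g y = H y := fun g y =>
    hσ.iInf_smul_mul g y (hσpos g y).le
  have hinv : ∀ (g : G) (y : Y), F (g • y) * H y = F y * H (g • y) := fun g y => by
    rw [← hFσ g y, ← hHσ g y]
    ring
  have hHcont : Continuous H :=
    hH.continuous_of_dense_orbits hmin hF hF₀ (fun y => (hH₀ y).le) hinv
  refine ⟨fun y => (H y)⁻¹, hHcont.inv₀ fun y => (hH₀ y).ne', fun y => inv_pos.2 (hH₀ y),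
    fun g y => ?_⟩
  rw [inv_div_inv, ← hHσ g y]
  field_simp [(hH₀ (g • y)).ne']

/-- Let `Y` be a compact Hausdorff space with a continuous minimal action of
a topological group `G`, and let `σ : G × Y → ℝ>0` be a multiplier of this action that is
bounded above.  Then `σ` is a trivial multiplier: there exists a continuous function
`f : Y → ℝ>0` with `σ(g,y) = f(g·y)/f(y)` for all `g ∈ G` and `y ∈ Y`. -/
theorem stmt_16 {G Y : Type*} [Group G] [TopologicalSpace G] [IsTopologicalGroup G]
    [TopologicalSpace Y] [CompactSpace Y] [T2Space Y]
    [MulAction G Y] [ContinuousSMul G Y]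
    -- the action is minimal: every orbit is dense
    (hmin : ∀ y : Y, Dense {z : Y | ∃ g : G, z = g • y})
    -- `σ` is a multiplier of the action
    (σ : G → Y → ℝ)
    (hσcont : Continuous fun p : G × Y => σ p.1 p.2)
    (hσpos : ∀ (g : G) (y : Y), 0 < σ g y)
    (hσmult : ∀ (g γ : G) (y : Y), σ (g * γ) y = σ g (γ • y) * σ γ y)
    -- `σ` is bounded above
    (M : ℝ) (hσbdd : ∀ (g : G) (y : Y), σ g y ≤ M) :
    ∃ f : Y → ℝ, Continuous f ∧ (∀ y : Y, 0 < f y) ∧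
      ∀ (g : G) (y : Y), σ g y = f (g • y) / f y :=
  stmt_16_general hmin σ hσcont hσpos hσmult M hσbdd
end

section
/- Let Y and Z be compact Hausdorff spaces with continuous actions of a topological group G, let φ : Y → Z be a continuous G-equivariant surjection, let σ_Z be a multiplier of the action on Z, and define its pullback σ_Y(g,y) := σ_Z(g, φ(y)). If σ_Y is a trivial multiplier on Y and the action of G on Y is proximal, then σ_Z is a trivial multiplier on Z. -/
/-!
The trivialising function `h` of the pulled-back multiplier is constant on the fibres of `φ`:
if `φ y₁ = φ y₂`, then `h (g • y₁) / h y₁ = h (g • y₂) / h y₂` for every `g`, so the ratio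
`h q₁ / h q₂` equals `h y₁ / h y₂` along the orbit of `(y₁, y₂)` and, by continuity, on its
closure; proximality puts a diagonal point `(p, p)` there, forcing `h y₁ = h y₂`. Hence `h`
descends along the quotient map `φ` to a continuous positive function trivialising `σ_Z`.
-/

open Topology

theorem eq_of_proximal_of_mul_eq_mul {G Y : Type*} [SMul G Y] [TopologicalSpace Y]
    {h : Y → ℝ} (hh : Continuous h) (hh0 : ∀ y, h y ≠ 0) {y₁ y₂ : Y}
    (hprox : ∃ p ∈ closure {p : Y × Y | ∃ g : G, p = (g • y₁, g • y₂)}, p.1 = p.2)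
    (hratio : ∀ g : G, h (g • y₁) * h y₂ = h (g • y₂) * h y₁) :
    h y₁ = h y₂ := by
  obtain ⟨p, hp, hdiag⟩ := hprox
  have hclosed : IsClosed {q : Y × Y | h q.1 * h y₂ = h q.2 * h y₁} :=
    isClosed_eq (by fun_prop) (by fun_prop)
  have hp' : h p.1 * h y₂ = h p.2 * h y₁ := by
    refine hclosed.closure_subset_iff.mpr ?_ hp
    rintro _ ⟨g, rfl⟩
    exact hratio g
  rw [hdiag] at hp'
  exact (mul_left_cancel₀ (hh0 p.2) hp').symm

theorem eq_of_proximal_of_eq_of_pullback_eq_div {G Y Z : Type*} [SMul G Y]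
    [TopologicalSpace Y]
    {φ : Y → Z} {σ : G → Z → ℝ} {h : Y → ℝ} (hh : Continuous h) (hh0 : ∀ y, h y ≠ 0)
    (hσ : ∀ (g : G) (y : Y), σ g (φ y) = h (g • y) / h y) {y₁ y₂ : Y}
    (hprox : ∃ p ∈ closure {p : Y × Y | ∃ g : G, p = (g • y₁, g • y₂)}, p.1 = p.2)
    (hφ : φ y₁ = φ y₂) :
    h y₁ = h y₂ := by
  have hsmul : ∀ (g : G) (y : Y), h (g • y) = σ g (φ y) * h y := fun g y =>
    ((eq_div_iff (hh0 y)).mp (hσ g y)).symm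
  refine eq_of_proximal_of_mul_eq_mul hh hh0 hprox fun g => ?_
  rw [hsmul, hsmul, hφ]
  ring

theorem stmt_18_general {G Y Z : Type*} [Group G]
    [TopologicalSpace Y] [CompactSpace Y]
    [TopologicalSpace Z] [T2Space Z]
    [MulAction G Y]
    [MulAction G Z]
    -- `φ` is a continuous `G`-equivariant surjection
    (φ : Y → Z) (hφcont : Continuous φ) (hφsurj : Function.Surjective φ)
    (hφequiv : ∀ (g : G) (y : Y), φ (g • y) = g • φ y)
    -- `σ_Z` is a multiplier of the action on `Z`
    (σZ : G → Z → ℝ)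
    -- the pullback `σ_Y(g,y) = σ_Z(g, φ(y))` is a trivial multiplier on `Y`
    (h : Y → ℝ) (hhcont : Continuous h) (hhpos : ∀ y : Y, 0 < h y)
    (htrivY : ∀ (g : G) (y : Y), σZ g (φ y) = h (g • y) / h y)
    -- the action of `G` on `Y` is proximal
    (hprox : ∀ y₁ y₂ : Y,
      ∃ p ∈ closure {p : Y × Y | ∃ g : G, p = (g • y₁, g • y₂)}, p.1 = p.2) :
    ∃ f : Z → ℝ, Continuous f ∧ (∀ z : Z, 0 < f z) ∧
      ∀ (g : G) (z : Z), σZ g z = f (g • z) / f z := by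
  let φC : C(Y, Z) := ⟨φ, hφcont⟩
  have hquot : IsQuotientMap φC := hφcont.isClosedMap.isQuotientMap hφcont hφsurj
  have hfactor : Function.FactorsThrough h φ := fun y₁ y₂ hφ =>
    eq_of_proximal_of_eq_of_pullback_eq_div hhcont (fun y => (hhpos y).ne') htrivY
      (hprox y₁ y₂) hφ
  let f := hquot.lift ⟨h, hhcont⟩ hfactor
  have hfφ : ∀ y, f (φ y) = h y :=
    DFunLike.congr_fun (hquot.lift_comp ⟨h, hhcont⟩ hfactor)
  refine ⟨f, f.continuous, fun z => ?_, fun g z => ?_⟩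
  · obtain ⟨y, rfl⟩ := hφsurj z
    rw [hfφ]
    exact hhpos y
  · obtain ⟨y, rfl⟩ := hφsurj z
    rw [htrivY, ← hφequiv, hfφ, hfφ]

/-- Let `Y` and `Z` be compact Hausdorff spaces with continuous actions of a
topological group `G`, let `φ : Y → Z` be a continuous `G`-equivariant surjection, let `σ_Z`
be a multiplier of the action on `Z`, and let `σ_Y(g,y) := σ_Z(g, φ(y))` be its pullback.
If `σ_Y` is a trivial multiplier on `Y` and the action of `G` on `Y` is proximal, then `σ_Z`
is a trivial multiplier on `Z`. -/
theorem stmt_18 {G Y Z : Type*} [Group G] [TopologicalSpace G] [IsTopologicalGroup G]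
    [TopologicalSpace Y] [CompactSpace Y] [T2Space Y]
    [TopologicalSpace Z] [CompactSpace Z] [T2Space Z]
    [MulAction G Y] [ContinuousSMul G Y]
    [MulAction G Z] [ContinuousSMul G Z]
    -- `φ` is a continuous `G`-equivariant surjection
    (φ : Y → Z) (hφcont : Continuous φ) (hφsurj : Function.Surjective φ)
    (hφequiv : ∀ (g : G) (y : Y), φ (g • y) = g • φ y)
    -- `σ_Z` is a multiplier of the action on `Z`
    (σZ : G → Z → ℝ)
    (hσcont : Continuous fun p : G × Z => σZ p.1 p.2)
    (hσpos : ∀ (g : G) (z : Z), 0 < σZ g z)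
    (hσmult : ∀ (g γ : G) (z : Z), σZ (g * γ) z = σZ g (γ • z) * σZ γ z)
    -- the pullback `σ_Y(g,y) = σ_Z(g, φ(y))` is a trivial multiplier on `Y`
    (h : Y → ℝ) (hhcont : Continuous h) (hhpos : ∀ y : Y, 0 < h y)
    (htrivY : ∀ (g : G) (y : Y), σZ g (φ y) = h (g • y) / h y)
    -- the action of `G` on `Y` is proximal
    (hprox : ∀ y₁ y₂ : Y,
      ∃ p ∈ closure {p : Y × Y | ∃ g : G, p = (g • y₁, g • y₂)}, p.1 = p.2) :
    ∃ f : Z → ℝ, Continuous f ∧ (∀ z : Z, 0 < f z) ∧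
      ∀ (g : G) (z : Z), σZ g z = f (g • z) / f z :=
  stmt_18_general φ hφcont hφsurj hφequiv σZ h hhcont hhpos htrivY hprox
end

section
/- Let Y be a compact Hausdorff space and let M(Y) be the cone of finite nonnegative regular Borel measures on Y with the weak-* topology. Let L : M(Y) → ℝ≥0 be a continuous function that is additive and positively homogeneous and satisfies L(μ) > 0 for every nonzero μ ∈ M(Y). Then there exists a strictly positive continuous function f : Y → ℝ>0 such that L(μ) = ∫_Y f dμ for all μ ∈ M(Y). -/
/-!
Put `f y := L (δ_y)`. Since `y ↦ δ_y` is weak-* continuous, `f` is continuous, and it is positive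
because `δ_y ≠ 0`. The maps `L` and `μ ↦ ∫ f dμ` are additive and positively homogeneous on the
cone of regular measures and agree on Dirac masses, hence on their nonnegative combinations. These
combinations are weak-* dense in all finite measures on a compact space: integrals of finitely many
test functions against `μ` are approximated by Riemann sums over a partition of `Y` on whose cells
those functions oscillate little. Both maps being continuous on the regular measures, they agree
there.
-/

open MeasureTheory Set Filter Topology Function
open scoped NNReal BoundedContinuousFunction

theorem Submodule.eqOn_span_of_map_add_of_map_smul {R M N : Type*} [Semiring R]
    [AddCommMonoid M] [Module R M] [AddCommMonoid N] [Module R N] {S : Submodule R M}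
    {s : Set M} (hs : s ⊆ S) {f g : M → N}
    (hf_add : ∀ x ∈ S, ∀ y ∈ S, f (x + y) = f x + f y)
    (hf_smul : ∀ x ∈ S, ∀ c : R, f (c • x) = c • f x)
    (hg_add : ∀ x ∈ S, ∀ y ∈ S, g (x + y) = g x + g y)
    (hg_smul : ∀ x ∈ S, ∀ c : R, g (c • x) = c • g x)
    (h : EqOn f g s) : EqOn f g (span R s) := by
  have hspan : span R s ≤ S := span_le.mpr hs
  intro x hx
  induction hx using span_induction with
  | mem x hx => exact h hx
  | zero =>
    have hf0 := hf_smul 0 S.zero_mem 0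
    have hg0 := hg_smul 0 S.zero_mem 0
    simp only [zero_smul] at hf0 hg0
    rw [hf0, hg0]
  | add x y hx hy hfx hfy =>
    rw [hf_add x (hspan hx) y (hspan hy), hg_add x (hspan hx) y (hspan hy), hfx, hfy]
  | smul c x hx hfx => rw [hf_smul x (hspan hx), hg_smul x (hspan hx), hfx]

namespace MeasureTheory

theorem exists_fin_measurableSet_partition_subordinate {X : Type*} [TopologicalSpace X]
    [CompactSpace X] [MeasurableSpace X] [OpensMeasurableSpace X] (U : X → Set X)
    (hU : ∀ x, IsOpen (U x)) (hxU : ∀ x, x ∈ U x) :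
    ∃ (m : ℕ) (E : Fin m → Set X) (t : Fin m → X), (∀ i, MeasurableSet (E i)) ∧
      Pairwise (Disjoint on E) ∧ ⋃ i, E i = univ ∧ ∀ i, E i ⊆ U (t i) := by
  obtain ⟨s, hs⟩ := CompactSpace.elim_nhds_subcover U fun x ↦ (hU x).mem_nhds (hxU x)
  set t : Fin s.card → X := fun i ↦ s.equivFin.symm i
  refine ⟨s.card, disjointed (U ∘ t), t, fun i ↦ ?_, disjoint_disjointed _, ?_,
    disjointed_subset _⟩
  · rw [disjointed_eq_inter_compl]
    exact (hU _).measurableSet.inter <|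
      .iInter fun j ↦ .iInter fun _ ↦ (hU _).measurableSet.compl
  · rw [iUnion_disjointed, eq_univ_iff_forall]
    intro x
    obtain ⟨y, hy, hxy⟩ := mem_iUnion₂.mp (hs.symm ▸ mem_univ x : x ∈ ⋃ y ∈ s, U y)
    exact mem_iUnion.mpr ⟨s.equivFin ⟨y, hy⟩, by simpa [t] using hxy⟩

theorem abs_sum_measureReal_mul_sub_integral_le {X ι : Type*} [MeasurableSpace X] [Fintype ι]
    {μ : Measure X} [IsFiniteMeasure μ] {E : ι → Set X} (hE : ∀ i, MeasurableSet (E i))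
    (hE_disj : Pairwise (Disjoint on E)) (hE_cover : ⋃ i, E i = univ) {g : X → ℝ}
    (hg : Integrable g μ) (t : ι → X) {δ : ℝ} (hosc : ∀ i, ∀ x ∈ E i, |g x - g (t i)| ≤ δ) :
    |∑ i, μ.real (E i) * g (t i) - ∫ x, g x ∂μ| ≤ δ * μ.real univ := by
  have hsplit : ∫ x, g x ∂μ = ∑ i, ∫ x in E i, g x ∂μ := by
    rw [← setIntegral_univ, ← hE_cover,
      integral_iUnion_fintype hE hE_disj fun _ ↦ hg.integrableOn]
  calc |∑ i, μ.real (E i) * g (t i) - ∫ x, g x ∂μ|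
      = |∑ i, ∫ x in E i, (g (t i) - g x) ∂μ| := by
        rw [hsplit, ← Finset.sum_sub_distrib]
        congr 1
        refine Finset.sum_congr rfl fun i _ ↦ ?_
        rw [integral_sub (integrable_const _) hg.integrableOn, setIntegral_const, smul_eq_mul]
    _ ≤ ∑ i, |∫ x in E i, (g (t i) - g x) ∂μ| := Finset.abs_sum_le_sum_abs _ _
    _ ≤ ∑ i, δ * μ.real (E i) := Finset.sum_le_sum fun i _ ↦
        (Real.norm_eq_abs _).symm.trans_le <|
          norm_setIntegral_le_of_norm_le_const (measure_lt_top _ _) fun x hx ↦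
            (abs_sub_comm _ _).trans_le (hosc i x hx)
    _ = δ * μ.real univ := by
        rw [← Finset.mul_sum, ← measureReal_iUnion_fintype hE_disj hE, hE_cover]

instance Measure.innerRegular_dirac {X : Type*} [MeasurableSpace X] [TopologicalSpace X]
    (x : X) : (Measure.dirac x).InnerRegular := by
  refine ⟨fun s hs r hr ↦ ⟨{x}, singleton_subset_iff.mpr ?_, isCompact_singleton, ?_⟩⟩
  · by_contra hx
    rw [Measure.dirac_apply' x hs, indicator_of_notMem hx] at hr
    exact ENNReal.not_lt_zero hr
  · rw [Measure.dirac_apply_of_mem (mem_singleton x)]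
    exact hr.trans_le prob_le_one

namespace FiniteMeasure

variable {X : Type*} [MeasurableSpace X]

noncomputable def dirac (x : X) : FiniteMeasure X := (diracProba x).toFiniteMeasure

@[simp]
theorem toMeasure_dirac (x : X) : (dirac x : Measure X) = Measure.dirac x := rfl

theorem dirac_ne_zero (x : X) : dirac x ≠ 0 := (diracProba x).toFiniteMeasure_nonzero

theorem continuous_dirac [TopologicalSpace X] [OpensMeasurableSpace X] :
    Continuous (dirac : X → FiniteMeasure X) :=
  ProbabilityMeasure.toFiniteMeasure_continuous.comp continuous_diracProba

variable (X) in
def regularCone [TopologicalSpace X] [BorelSpace X] [R1Space X] :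
    Submodule ℝ≥0 (FiniteMeasure X) where
  carrier := {μ | (μ : Measure X).Regular}
  add_mem' {μ ν} hμ hν := by
    simp only [mem_ofPred_eq, toMeasure_add] at *
    infer_instance
  zero_mem' := by simp only [mem_ofPred_eq, toMeasure_zero]; infer_instance
  smul_mem' c μ hμ := by simp only [mem_ofPred_eq, toMeasure_smul] at *; infer_instance

theorem dirac_mem_regularCone [TopologicalSpace X] [BorelSpace X] [R1Space X] (x : X) :
    dirac x ∈ regularCone X :=
  show (Measure.dirac x).Regular by infer_instance

theorem integral_sum_smul_dirac [TopologicalSpace X] [OpensMeasurableSpace X] {ι : Type*}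
    (s : Finset ι) (c : ι → ℝ≥0) (t : ι → X) (g : X →ᵇ ℝ) :
    ∫ x, g x ∂(∑ i ∈ s, c i • dirac (t i) : FiniteMeasure X) = ∑ i ∈ s, c i * g (t i) := by
  rw [toMeasure_sum, integral_finsetSum_measure fun i _ ↦ g.integrable _]
  refine Finset.sum_congr rfl fun i _ ↦ ?_
  rw [toMeasure_smul, integral_smul_nnreal_measure, toMeasure_dirac,
    integral_dirac' _ _ g.continuous.stronglyMeasurable, NNReal.smul_def, smul_eq_mul]

theorem exists_mem_span_dirac_abs_integral_sub_le [TopologicalSpace X] [CompactSpace X]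
    [OpensMeasurableSpace X] (μ : FiniteMeasure X) (F : Finset (X →ᵇ ℝ)) {δ : ℝ} (hδ : 0 < δ) :
    ∃ ν ∈ Submodule.span ℝ≥0 (range (dirac : X → FiniteMeasure X)), ∀ g ∈ F,
      |∫ x, g x ∂(ν : Measure X) - ∫ x, g x ∂(μ : Measure X)| ≤
        δ * (μ : Measure X).real univ := by
  let G : X → (F → ℝ) := fun x g ↦ g.1 x
  have hG : Continuous G := continuous_pi fun g ↦ g.1.continuous
  obtain ⟨m, E, t, hE, hE_disj, hE_cover, hE_sub⟩ :=
    exists_fin_measurableSet_partition_subordinate (fun y ↦ G ⁻¹' Metric.ball (G y) δ)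
      (fun y ↦ Metric.isOpen_ball.preimage hG) (fun y ↦ Metric.mem_ball_self hδ)
  refine ⟨∑ i, μ (E i) • dirac (t i),
    sum_mem fun i _ ↦ Submodule.smul_mem _ _ (Submodule.subset_span (mem_range_self _)),
    fun g hg ↦ ?_⟩
  have hosc : ∀ i, ∀ x ∈ E i, |g x - g (t i)| ≤ δ := fun i x hx ↦
    (dist_le_pi_dist (G x) (G (t i)) ⟨g, hg⟩).trans (hE_sub i hx).le
  rw [integral_sum_smul_dirac]
  exact abs_sum_measureReal_mul_sub_integral_le hE hE_disj hE_cover (g.integrable _) t hosc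

theorem dense_span_dirac [TopologicalSpace X] [CompactSpace X] [OpensMeasurableSpace X] :
    Dense (Submodule.span ℝ≥0 (range (dirac : X → FiniteMeasure X)) : Set (FiniteMeasure X)) := by
  classical
  intro μ
  -- The weak-* topology need not be first countable, so we approximate `μ` along the directed
  -- set of pairs (finite set of test functions, precision).
  choose ν hν_mem hν using fun p : Finset (X →ᵇ ℝ) × ℕ ↦
    exists_mem_span_dirac_abs_integral_sub_le μ p.1 (Nat.inv_pos_of_nat (n := p.2))
  refine mem_closure_of_tendsto (b := atTop) ?_ (.of_forall hν_mem)
  rw [tendsto_iff_forall_integral_tendsto]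
  intro g
  have hsnd : Tendsto (Prod.snd : Finset (X →ᵇ ℝ) × ℕ → ℕ) atTop atTop :=
    tendsto_atTop_atTop_of_monotone monotone_snd fun n ↦ ⟨(∅, n), le_rfl⟩
  have hε : Tendsto (fun p : Finset (X →ᵇ ℝ) × ℕ ↦ ((p.2 : ℝ) + 1)⁻¹ * (μ : Measure X).real univ)
      atTop (𝓝 0) := by
    simpa [one_div] using
      (tendsto_one_div_add_atTop_nhds_zero_nat.comp hsnd).mul_const ((μ : Measure X).real univ)
  refine tendsto_iff_dist_tendsto_zero.mpr
    (squeeze_zero' (.of_forall fun _ ↦ dist_nonneg) ?_ hε)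
  filter_upwards [eventually_ge_atTop ({g}, 0)] with p hp
  exact hν p g (hp.1 (Finset.mem_singleton_self g))

end FiniteMeasure

end MeasureTheory

open FiniteMeasure in
theorem stmt_19_general {Y : Type*} [TopologicalSpace Y] [CompactSpace Y] [T2Space Y]
    [MeasurableSpace Y] [BorelSpace Y]
    -- `M(Y)`: the regular members of the cone of finite Borel measures with the weak-* topology
    (R : Set (FiniteMeasure Y)) (hR : R = {μ : FiniteMeasure Y | (μ : Measure Y).Regular})
    (L : FiniteMeasure Y → ℝ)
    (hLcont : ContinuousOn L R)
    (hLadd : ∀ μ ∈ R, ∀ ν ∈ R, L (μ + ν) = L μ + L ν)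
    (hLsmul : ∀ μ ∈ R, ∀ c : ℝ≥0, L (c • μ) = (c : ℝ) * L μ)
    (hLpos : ∀ μ ∈ R, μ ≠ 0 → 0 < L μ) :
    ∃ f : Y → ℝ, Continuous f ∧ (∀ y : Y, 0 < f y) ∧
      ∀ μ ∈ R, L μ = ∫ y, f y ∂(μ : Measure Y) := by
  change R = regularCone Y at hR
  subst hR
  let f : Y →ᵇ ℝ := .mkOfCompact ⟨fun y ↦ L (dirac y),
    hLcont.comp_continuous continuous_dirac dirac_mem_regularCone⟩
  refine ⟨f, f.continuous, fun y ↦ hLpos _ (dirac_mem_regularCone y) (dirac_ne_zero y), ?_⟩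
  have hdirac : range (dirac (X := Y)) ⊆ regularCone Y :=
    range_subset_iff.mpr fun y ↦ dirac_mem_regularCone y
  have heq : EqOn L (fun μ ↦ ∫ y, f y ∂(μ : Measure Y)) 
      (Submodule.span ℝ≥0 (range (dirac (X := Y)))) :=
    Submodule.eqOn_span_of_map_add_of_map_smul (g := fun μ ↦ ∫ y, f y ∂(μ : Measure Y))
      hdirac hLadd (fun μ hμ c ↦ by rw [hLsmul μ hμ c, NNReal.smul_def, smul_eq_mul])
      (fun μ _ ν _ ↦ by
        rw [toMeasure_add, integral_add_measure (f.integrable _) (f.integrable _)])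
      (fun μ _ c ↦ by rw [toMeasure_smul, integral_smul_nnreal_measure])
      (by rintro _ ⟨y, rfl⟩; simp [f])
  exact fun μ hμ ↦ heq.of_subset_closure hLcont
    (continuous_integral_boundedContinuousFunction f).continuousOn
    (Submodule.span_le.mpr hdirac) (fun μ _ ↦ dense_span_dirac μ) hμ

/-- Let `Y` be a compact Hausdorff space and let `M(Y)` be the cone of
finite nonnegative regular Borel measures on `Y` with the weak-* topology.  Let
`L : M(Y) → ℝ≥0` be a continuous function that is additive and positively homogeneous and
satisfies `L(μ) > 0` for every nonzero `μ ∈ M(Y)`.  Then there exists a strictly positive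
continuous function `f : Y → ℝ>0` such that `L(μ) = ∫_Y f dμ` for all `μ ∈ M(Y)`. -/
theorem stmt_19 {Y : Type*} [TopologicalSpace Y] [CompactSpace Y] [T2Space Y]
    [MeasurableSpace Y] [BorelSpace Y]
    -- `M(Y)`: the regular members of the cone of finite Borel measures with the weak-* topology
    (R : Set (FiniteMeasure Y)) (hR : R = {μ : FiniteMeasure Y | (μ : Measure Y).Regular})
    (L : FiniteMeasure Y → ℝ)
    (hLcont : ContinuousOn L R)
    (hLnonneg : ∀ μ ∈ R, 0 ≤ L μ)
    (hLadd : ∀ μ ∈ R, ∀ ν ∈ R, L (μ + ν) = L μ + L ν)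
    (hLsmul : ∀ μ ∈ R, ∀ c : ℝ≥0, L (c • μ) = (c : ℝ) * L μ)
    (hLpos : ∀ μ ∈ R, μ ≠ 0 → 0 < L μ) :
    ∃ f : Y → ℝ, Continuous f ∧ (∀ y : Y, 0 < f y) ∧
      ∀ μ ∈ R, L μ = ∫ y, f y ∂(μ : Measure Y) :=
  stmt_19_general R hR L hLcont hLadd hLsmul hLpos
end
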